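/- arXiv:2006.14226 — 7 statements merged into one kernel-verified Lean document; each statement's English description precedes it below -/
import Mathlib

section
/- Let d ≥ 1, ρ ≥ 1, and let μ be a probability measure on ℝ^d belonging to M^d_ρ. Then there exists S > 0 such that for every multi-index j ∈ ℕ^d with j ≠ 0, the mixed absolute moment ∫ ∏_{a=1}^d |x_a|^{j_a} dμ(x) is finite and satisfies ∫ ∏_{a=1}^d |x_a|^{j_a} dμ(x) ≤ (∏_{a=1}^d j_a!) · S^{‖j‖₁} · ‖j‖₁^{−‖j‖₁/ρ}, where ‖j‖₁ = Σ_{a=1}^d j_a. In particular the characteristic function of μ belongs to the class Υ_{1/ρ, S}. -/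
namespace Stmt4

open MeasureTheory

/-- Membership in M^d_ρ: the Laplace transform has exponential growth of order ρ. -/
def memM {d : ℕ} (μ : Measure (Fin d → ℝ)) (ρ : ℝ) : Prop :=
  ∃ A B : ℝ, 0 < A ∧ 0 < B ∧ ∀ lam : Fin d → ℝ,
    ∫⁻ x, ENNReal.ofReal (Real.exp (∑ a, lam a * x a)) ∂μ ≤
      ENNReal.ofReal (A * Real.exp (B * Real.sqrt (∑ a, lam a ^ 2) ^ ρ))

/-!
For `t > 0` and `k : ℕ`, `t ^ k |y| ^ k ≤ k! e^{t|y|} ≤ k! (e^{ty} + e^{-ty})`. Multiplying over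
the coordinates, `t ^ n ∏ |x_a| ^ {j_a}` (with `n = ∑ j_a`) is at most `∏ j_a!` times the sum of
the `2^d` exponentials `e^{⟨λ, x⟩}` over the sign vectors `λ ∈ {±t}^d`, all of norm `√d t`.
Integrating against `μ ∈ M^d_ρ` gives
`t ^ n ∫ ∏ |x_a| ^ {j_a} dμ ≤ (∏ j_a!) 2^d A exp (B (√d t) ^ ρ)`, and the choice `t = n ^ (1/ρ)`
makes the exponential `exp (B d^{ρ/2} n)`, geometric in `n`, while `t ^ n = n ^ (n/ρ)`.
-/

open Finset Real
open scoped Nat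

lemma integrable_and_integral_le_of_lintegral_le {α : Type*} [MeasurableSpace α] {μ : Measure α}
    {f : α → ℝ} {C : ℝ} (hf : 0 ≤ᵐ[μ] f) (hfm : AEStronglyMeasurable f μ) (hC : 0 ≤ C)
    (h : ∫⁻ x, ENNReal.ofReal (f x) ∂μ ≤ ENNReal.ofReal C) :
    Integrable f μ ∧ ∫ x, f x ∂μ ≤ C := by
  refine ⟨⟨hfm, (hasFiniteIntegral_iff_ofReal hf).2 (h.trans_lt ENNReal.ofReal_lt_top)⟩, ?_⟩
  rw [integral_eq_lintegral_of_nonneg_ae hf hfm]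
  exact ENNReal.toReal_le_of_le_ofReal hC h

lemma pow_mul_abs_pow_le_factorial_mul_exp {t : ℝ} (ht : 0 ≤ t) (y : ℝ) (k : ℕ) :
    t ^ k * |y| ^ k ≤ k ! * exp (t * |y|) := by
  have h := pow_div_factorial_le_exp (x := t * |y|) (by positivity) k
  rw [div_le_iff₀ (by positivity)] at h
  linarith [mul_pow t |y| k]

section Moments

variable {ι : Type*} [Fintype ι] [DecidableEq ι]

def signVec (t : ℝ) (T : Finset ι) : ι → ℝ := T.piecewise (fun _ => t) (fun _ => -t)

lemma sum_signVec_sq (t : ℝ) (T : Finset ι) :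
    ∑ a, signVec t T a ^ 2 = Fintype.card ι * t ^ 2 := by
  have : ∀ a, signVec t T a ^ 2 = t ^ 2 := fun a => by
    by_cases h : a ∈ T <;> simp [signVec, h]
  simp [this]

lemma prod_exp_add_exp_neg_eq_sum_exp_signVec (t : ℝ) (x : ι → ℝ) :
    ∏ a, (exp (t * x a) + exp (-t * x a)) = ∑ T : Finset ι, exp (∑ a, signVec t T a * x a) := by
  rw [Fintype.prod_add]
  refine sum_congr rfl fun T _ => ?_
  have h : ∀ a, exp (signVec t T a * x a) =
      T.piecewise (fun a => exp (t * x a)) (fun a => exp (-t * x a)) a := fun a => by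
    by_cases ha : a ∈ T <;> simp [signVec, ha]
  rw [exp_sum, prod_congr rfl fun a _ => h a, prod_piecewise, univ_inter, compl_eq_univ_sdiff]

lemma prod_exp_abs_le_sum_exp_signVec {t : ℝ} (ht : 0 ≤ t) (x : ι → ℝ) :
    ∏ a, exp (t * |x a|) ≤ ∑ T : Finset ι, exp (∑ a, signVec t T a * x a) := by
  rw [← prod_exp_add_exp_neg_eq_sum_exp_signVec]
  refine prod_le_prod (fun a _ => (exp_pos _).le) fun a _ => ?_
  rw [← abs_of_nonneg ht, ← abs_mul, neg_mul, abs_of_nonneg ht]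
  exact exp_abs_le _

lemma pow_sum_mul_prod_abs_pow_le {t : ℝ} (ht : 0 ≤ t) (j : ι → ℕ) (x : ι → ℝ) :
    t ^ (∑ a, j a) * ∏ a, |x a| ^ j a ≤
      (∏ a, (j a)! : ℕ) * ∑ T : Finset ι, exp (∑ a, signVec t T a * x a) := by
  calc t ^ (∑ a, j a) * ∏ a, |x a| ^ j a = ∏ a, t ^ j a * |x a| ^ j a := by
        rw [prod_mul_distrib, prod_pow_eq_pow_sum]
    _ ≤ ∏ a, ((j a)! * exp (t * |x a|)) :=
        prod_le_prod (fun a _ => by positivity)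
          fun a _ => pow_mul_abs_pow_le_factorial_mul_exp ht (x a) (j a)
    _ = (∏ a, (j a)! : ℕ) * ∏ a, exp (t * |x a|) := by
        rw [prod_mul_distrib, Nat.cast_prod]
    _ ≤ _ := by gcongr; exact prod_exp_abs_le_sum_exp_signVec ht x

def HasLaplaceBound (μ : Measure (ι → ℝ)) (ρ A B : ℝ) : Prop :=
  ∀ lam : ι → ℝ, ∫⁻ x, ENNReal.ofReal (exp (∑ a, lam a * x a)) ∂μ ≤
    ENNReal.ofReal (A * exp (B * sqrt (∑ a, lam a ^ 2) ^ ρ))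

variable {μ : Measure (ι → ℝ)} {ρ A B : ℝ}

lemma integrable_exp_signVec_and_integral_le (hA : 0 ≤ A) (hμ : HasLaplaceBound μ ρ A B) {t : ℝ}
    (ht : 0 ≤ t) (T : Finset ι) :
    Integrable (fun x => exp (∑ a, signVec t T a * x a)) μ ∧
      ∫ x, exp (∑ a, signVec t T a * x a) ∂μ ≤ A * exp (B * (sqrt (Fintype.card ι) * t) ^ ρ) := by
  have h := hμ (signVec t T)
  rw [sum_signVec_sq, sqrt_mul (Nat.cast_nonneg _), sqrt_sq ht] at h
  exact integrable_and_integral_le_of_lintegral_le (ae_of_all _ fun _ => (exp_pos _).le)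
    (Continuous.aestronglyMeasurable (by fun_prop)) (by positivity) h

theorem integrable_prod_abs_pow_and_pow_sum_mul_integral_le (hA : 0 ≤ A)
    (hμ : HasLaplaceBound μ ρ A B) {t : ℝ} (ht : 0 < t) (j : ι → ℕ) :
    Integrable (fun x => ∏ a, |x a| ^ j a) μ ∧
      t ^ (∑ a, j a) * ∫ x, ∏ a, |x a| ^ j a ∂μ ≤
        (∏ a, (j a)! : ℕ) *
          (2 ^ Fintype.card ι * (A * exp (B * (sqrt (Fintype.card ι) * t) ^ ρ))) := by
  have hexp := integrable_exp_signVec_and_integral_le hA hμ ht.le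
  have hg : Integrable (fun x => ∑ T : Finset ι, exp (∑ a, signVec t T a * x a)) μ :=
    integrable_finsetSum _ fun T _ => (hexp T).1
  have hpt := pow_sum_mul_prod_abs_pow_le ht.le j
  have hint : Integrable (fun x => ∏ a, |x a| ^ j a) μ := by
    refine (hg.const_mul ((∏ a, (j a)! : ℕ) / t ^ (∑ a, j a))).mono'
      (Continuous.aestronglyMeasurable (by fun_prop))
      (ae_of_all _ fun x => ?_)
    rw [norm_of_nonneg (by positivity), div_mul_eq_mul_div, le_div_iff₀ (by positivity), mul_comm]
    exact hpt x
  refine ⟨hint, ?_⟩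
  calc t ^ (∑ a, j a) * ∫ x, ∏ a, |x a| ^ j a ∂μ
      = ∫ x, t ^ (∑ a, j a) * ∏ a, |x a| ^ j a ∂μ := (integral_const_mul _ _).symm
    _ ≤ ∫ x, (∏ a, (j a)! : ℕ) * ∑ T : Finset ι, exp (∑ a, signVec t T a * x a) ∂μ :=
        integral_mono (hint.const_mul _) (hg.const_mul _) hpt
    _ = (∏ a, (j a)! : ℕ) * ∑ T : Finset ι, ∫ x, exp (∑ a, signVec t T a * x a) ∂μ := by
        rw [integral_const_mul, integral_finsetSum _ fun T _ => (hexp T).1]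
    _ ≤ (∏ a, (j a)! : ℕ) * ∑ _T : Finset ι, A * exp (B * (sqrt (Fintype.card ι) * t) ^ ρ) := by
        gcongr with T; exact (hexp T).2
    _ = _ := by simp [Fintype.card_finset]

end Moments

theorem stmt4_general (d : ℕ) (ρ : ℝ) (hρ : 1 ≤ ρ)
    (μ : Measure (Fin d → ℝ)) (hμ : memM μ ρ) :
    ∃ S : ℝ, 0 < S ∧ ∀ j : Fin d → ℕ, j ≠ 0 →
      Integrable (fun x => ∏ a, |x a| ^ j a) μ ∧
      (∫ x, ∏ a, |x a| ^ j a ∂μ) ≤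
        ((∏ a, Nat.factorial (j a) : ℕ) : ℝ) * S ^ (∑ a, j a) *
          ((∑ a, j a : ℕ) : ℝ) ^ (-(((∑ a, j a : ℕ) : ℝ) / ρ)) := by
  obtain ⟨A, B, hA, -, hbound⟩ := hμ
  set K := B * sqrt d ^ ρ
  set M := max (2 ^ d * A) 1
  refine ⟨M * exp K, by positivity, fun j hj => ?_⟩
  set n := ∑ a, j a
  have hn : n ≠ 0 := fun h => hj (funext fun a => sum_eq_zero_iff.1 h a (mem_univ a))
  have hnR : (0 : ℝ) < n := by positivity
  obtain ⟨hint, hle⟩ := integrable_prod_abs_pow_and_pow_sum_mul_integral_le hA.le hbound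
    (rpow_pos_of_pos hnR ρ⁻¹) j
  refine ⟨hint, ?_⟩
  rw [Fintype.card_fin, ← rpow_natCast, ← rpow_mul hnR.le,
    mul_rpow (sqrt_nonneg _) (by positivity), ← rpow_mul hnR.le,
    inv_mul_cancel₀ (zero_lt_one.trans_le hρ).ne', rpow_one, inv_mul_eq_div] at hle
  have hexp : 2 ^ d * (A * exp (B * (sqrt d ^ ρ * n))) ≤ (M * exp K) ^ n := by
    rw [mul_pow, ← exp_nat_mul, ← mul_assoc, mul_comm (n : ℝ), ← mul_assoc]
    gcongr
    exact (le_max_left _ _).trans (le_self_pow₀ (le_max_right _ _) hn)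
  rw [rpow_neg hnR.le, ← div_eq_mul_inv, le_div_iff₀ (by positivity), mul_comm]
  exact hle.trans (by gcongr)

theorem stmt4 (d : ℕ) (hd : 1 ≤ d) (ρ : ℝ) (hρ : 1 ≤ ρ)
    (μ : Measure (Fin d → ℝ)) [IsProbabilityMeasure μ] (hμ : memM μ ρ) :
    ∃ S : ℝ, 0 < S ∧ ∀ j : Fin d → ℕ, j ≠ 0 →
      Integrable (fun x => ∏ a, |x a| ^ j a) μ ∧
      (∫ x, ∏ a, |x a| ^ j a ∂μ) ≤
        ((∏ a, Nat.factorial (j a) : ℕ) : ℝ) * S ^ (∑ a, j a) *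
          ((∑ a, j a : ℕ) : ℝ) ^ (-(((∑ a, j a : ℕ) : ℝ) / ρ)) :=
  stmt4_general d ρ hρ μ hμ

end Stmt4
end

section
/- Let d ≥ 1 and κ > 0. There exists a constant c > 0, depending only on κ and d, such that the following holds: for every S > 0 and every probability measure μ on ℝ^d all of whose mixed absolute moments are finite and satisfy ∫ ∏_{a=1}^d |x_a|^{j_a} dμ(x) ≤ (∏_{a=1}^d j_a!) · S^{‖j‖₁} · ‖j‖₁^{−κ‖j‖₁} for every multi-index j ∈ ℕ^d with j ≠ 0, one has, for all λ ∈ ℝ^d, ∫ exp(λᵀx) dμ(x) ≤ c · (1 + (S‖λ‖)^{(d+1)/κ}) · exp(κ · (S‖λ‖)^{1/κ}). In particular μ belongs to M^d_{1/κ}. -/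
/- STATEMENT 5: converse moment bound. For d ≥ 1 and κ > 0 there is c > 0 (depending only
   on κ and d) such that any probability measure μ on ℝ^d whose mixed absolute moments
   satisfy ∫ ∏_a |x_a|^{j_a} dμ ≤ (∏_a j_a!) S^{‖j‖₁} ‖j‖₁^{−κ‖j‖₁} for all j ≠ 0 has
   ∫ exp(λᵀx) dμ ≤ c (1 + (S‖λ‖)^{(d+1)/κ}) exp(κ (S‖λ‖)^{1/κ}) for all λ; in particular
   μ ∈ M^d_{1/κ}. -/

namespace Stmt5

open MeasureTheory
open scoped ENNReal

/-- Membership in M^d_ρ: the Laplace transform has exponential growth of order ρ. -/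
def memM {d : ℕ} (μ : Measure (Fin d → ℝ)) (ρ : ℝ) : Prop :=
  ∃ A B : ℝ, 0 < A ∧ 0 < B ∧ ∀ lam : Fin d → ℝ,
    ∫⁻ x, ENNReal.ofReal (Real.exp (∑ a, lam a * x a)) ∂μ ≤
      ENNReal.ofReal (A * Real.exp (B * Real.sqrt (∑ a, lam a ^ 2) ^ ρ))

open ENNReal in
private lemma prod_tsum_eq : ∀ (d : ℕ) (φ : Fin d → ℕ → ℝ≥0∞),
    ∏ a, ∑' k, φ a k = ∑' j : Fin d → ℕ, ∏ a, φ a (j a)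
  | 0, φ => by
    rw [tsum_eq_single (fun _ => 0) (fun b hb => absurd (Subsingleton.elim b _) hb)]
    simp
  | d + 1, φ => by
    calc ∏ a, ∑' k, φ a k
        = (∑' k, φ 0 k) * ∏ a : Fin d, ∑' k, φ a.succ k := Fin.prod_univ_succ _
      _ = (∑' k, φ 0 k) * ∑' j : Fin d → ℕ, ∏ a, φ a.succ (j a) := by
          rw [prod_tsum_eq d (fun a k => φ a.succ k)]
      _ = ∑' k, ∑' j : Fin d → ℕ, φ 0 k * ∏ a, φ a.succ (j a) := by
          rw [← ENNReal.tsum_mul_right]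
          exact tsum_congr fun k => ENNReal.tsum_mul_left.symm
      _ = ∑' p : ℕ × (Fin d → ℕ), φ 0 p.1 * ∏ a, φ a.succ (p.2 a) := ENNReal.tsum_prod.symm
      _ = ∑' j : Fin (d+1) → ℕ, ∏ a, φ a (j a) := by
          rw [← (Fin.consEquiv (fun _ => ℕ)).tsum_eq (fun j : Fin (d+1) → ℕ => ∏ a, φ a (j a))]
          exact tsum_congr fun p => by
            simp [Fin.consEquiv, Fin.prod_univ_succ]

private lemma ofReal_exp_tsum {w : ℝ} (hw : 0 ≤ w) :
    ENNReal.ofReal (Real.exp w) = ∑' k : ℕ, ENNReal.ofReal (w ^ k / (k.factorial : ℝ)) := by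
  rw [Real.exp_eq_exp_ℝ, NormedSpace.exp_eq_tsum_div]
  exact ENNReal.ofReal_tsum_of_nonneg (fun k => by positivity) (Real.summable_pow_div_factorial w)

private lemma key_bound {κ : ℝ} (hκ : 0 < κ) {t : ℝ} (ht : 0 ≤ t) {n : ℕ} (hn : 1 ≤ n) :
    t ^ n * (n : ℝ) ^ (-(κ * (n : ℝ))) ≤ Real.exp (κ * t ^ (1/κ)) * Real.exp (-κ) ^ n := by
  have hn0 : (0:ℝ) < n := by exact_mod_cast hn
  set u := t ^ (1/κ) with hu_def
  have hu : 0 ≤ u := Real.rpow_nonneg ht _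
  have hbase : t * (n:ℝ) ^ (-κ) ≤ Real.exp (κ * (u / n - 1)) := by
    have ht' : u ^ κ = t := by
      rw [hu_def, one_div, Real.rpow_inv_rpow ht hκ.ne']
    have h1 : t * (n:ℝ) ^ (-κ) = (u / n) ^ κ := by
      rw [div_eq_mul_inv, Real.mul_rpow hu (by positivity), ht', Real.inv_rpow hn0.le,
        ← Real.rpow_neg hn0.le]
    have h2 : u / n ≤ Real.exp (u / n - 1) := by
      have := Real.add_one_le_exp (u / n - 1); linarith
    calc t * (n:ℝ) ^ (-κ) = (u/n) ^ κ := h1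
      _ ≤ Real.exp (u/n - 1) ^ κ := Real.rpow_le_rpow (by positivity) h2 hκ.le
      _ = Real.exp ((u/n - 1) * κ) := (Real.exp_mul _ κ).symm
      _ = Real.exp (κ * (u/n - 1)) := by ring_nf
  have hb0 : (0:ℝ) ≤ t * (n:ℝ) ^ (-κ) := by positivity
  have h3 : (t * (n:ℝ) ^ (-κ)) ^ n ≤ Real.exp (κ * (u/n - 1)) ^ n := pow_le_pow_left₀ hb0 hbase n
  have h4 : Real.exp (κ * (u/n - 1)) ^ n = Real.exp (κ * u) * Real.exp (-κ) ^ n := by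
    rw [← Real.exp_nat_mul, ← Real.exp_nat_mul, ← Real.exp_add]
    congr 1
    have hne : (n:ℝ) ≠ 0 := hn0.ne'
    field_simp
    ring
  have h5 : (n:ℝ) ^ (-(κ * (n:ℝ))) = ((n:ℝ) ^ (-κ)) ^ n := by
    rw [← Real.rpow_natCast ((n:ℝ) ^ (-κ)) n, ← Real.rpow_mul hn0.le, neg_mul]
  rw [h5, ← mul_pow]
  exact h3.trans (le_of_eq h4)

theorem stmt5 (d : ℕ) (hd : 1 ≤ d) (κ : ℝ) (hκ : 0 < κ) :
    ∃ c : ℝ, 0 < c ∧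
      ∀ S : ℝ, 0 < S →
      ∀ μ : Measure (Fin d → ℝ), IsProbabilityMeasure μ →
        (∀ j : Fin d → ℕ, j ≠ 0 →
          Integrable (fun x => ∏ a, |x a| ^ j a) μ ∧
          (∫ x, ∏ a, |x a| ^ j a ∂μ) ≤
            ((∏ a, Nat.factorial (j a) : ℕ) : ℝ) * S ^ (∑ a, j a) *
              ((∑ a, j a : ℕ) : ℝ) ^ (-(κ * ((∑ a, j a : ℕ) : ℝ)))) →
        (∀ lam : Fin d → ℝ,
          ∫⁻ x, ENNReal.ofReal (Real.exp (∑ a, lam a * x a)) ∂μ ≤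
            ENNReal.ofReal (c * (1 + (S * Real.sqrt (∑ a, lam a ^ 2)) ^ (((d : ℝ) + 1) / κ)) *
              Real.exp (κ * (S * Real.sqrt (∑ a, lam a ^ 2)) ^ (1 / κ)))) ∧
        memM μ (1 / κ) := by
  have hexp1 : Real.exp (-κ) < 1 := by
    rw [← Real.exp_zero]; exact Real.exp_lt_exp.2 (by linarith)
  have hexp : (0:ℝ) < 1 - Real.exp (-κ) := by linarith
  set r : ℝ := (1 - Real.exp (-κ))⁻¹ with hr_def
  have hr : 0 < r := inv_pos.2 hexp
  set c : ℝ := 1 + r ^ d with hc_def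
  have hc : 0 < c := by positivity
  refine ⟨c, hc, ?_⟩
  intro S hS μ hμ hmom
  have hmain : ∀ lam : Fin d → ℝ,
      ∫⁻ x, ENNReal.ofReal (Real.exp (∑ a, lam a * x a)) ∂μ ≤
        ENNReal.ofReal (c * (1 + (S * Real.sqrt (∑ a, lam a ^ 2)) ^ (((d : ℝ) + 1) / κ)) *
          Real.exp (κ * (S * Real.sqrt (∑ a, lam a ^ 2)) ^ (1 / κ))) := by
    intro lam
    set L := Real.sqrt (∑ a, lam a ^ 2) with hL_def
    have hL : 0 ≤ L := Real.sqrt_nonneg _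
    have habs : ∀ a, |lam a| ≤ L := by
      intro a
      rw [hL_def, ← Real.sqrt_sq_eq_abs]
      exact Real.sqrt_le_sqrt
        (Finset.single_le_sum (f := fun a => lam a ^ 2) (fun i _ => sq_nonneg _)
          (Finset.mem_univ a))
    set t := S * L with ht_def
    have ht : 0 ≤ t := mul_nonneg hS.le hL
    set u := t ^ (1/κ) with hu_def
    have hu : 0 ≤ u := Real.rpow_nonneg ht _
    set q : ℝ≥0∞ := ENNReal.ofReal (Real.exp (-κ)) with hq_def
    set E : ℝ≥0∞ := ENNReal.ofReal (Real.exp (κ * u)) with hE_def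
    set g : (Fin d → ℕ) → (Fin d → ℝ) → ℝ≥0∞ := fun j x =>
      ENNReal.ofReal (∏ a, (|lam a| * |x a|) ^ j a / ((j a).factorial : ℝ)) with hg_def
    have hg_meas : ∀ j, Measurable (g j) := by
      intro j
      apply ENNReal.measurable_ofReal.comp
      apply Finset.measurable_prod
      intro a _
      exact ((measurable_const.mul (measurable_pi_apply a).abs).pow_const _).div_const _
    have hpt : ∀ x : Fin d → ℝ,
        ENNReal.ofReal (Real.exp (∑ a, lam a * x a)) ≤ ∑' j, g j x := by
      intro x
      have h1 : Real.exp (∑ a, lam a * x a) ≤ Real.exp (∑ a, |lam a| * |x a|) := by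
        apply Real.exp_le_exp.2
        apply Finset.sum_le_sum
        intro a _
        calc lam a * x a ≤ |lam a * x a| := le_abs_self _
          _ = |lam a| * |x a| := abs_mul _ _
      refine le_trans (ENNReal.ofReal_le_ofReal h1) (le_of_eq ?_)
      rw [Real.exp_sum, ENNReal.ofReal_prod_of_nonneg (fun a _ => (Real.exp_pos _).le)]
      have hexps : ∀ a : Fin d, ENNReal.ofReal (Real.exp (|lam a| * |x a|)) =
          ∑' k : ℕ, ENNReal.ofReal ((|lam a| * |x a|) ^ k / (k.factorial : ℝ)) := fun a =>
        ofReal_exp_tsum (by positivity)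
      rw [Finset.prod_congr rfl (fun a _ => hexps a),
        prod_tsum_eq d (fun a k => ENNReal.ofReal ((|lam a| * |x a|) ^ k / (k.factorial : ℝ)))]
      exact tsum_congr fun j =>
        (ENNReal.ofReal_prod_of_nonneg (fun a _ => by positivity)).symm
    have hint : ∫⁻ x, ENNReal.ofReal (Real.exp (∑ a, lam a * x a)) ∂μ ≤
        ∑' j, ∫⁻ x, g j x ∂μ := by
      calc ∫⁻ x, ENNReal.ofReal (Real.exp (∑ a, lam a * x a)) ∂μ
          ≤ ∫⁻ x, ∑' j, g j x ∂μ := lintegral_mono hpt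
        _ = ∑' j, ∫⁻ x, g j x ∂μ := lintegral_tsum fun j => (hg_meas j).aemeasurable
    have hzero : ∫⁻ x, g (0 : Fin d → ℕ) x ∂μ = 1 := by
      have h0 : g (0 : Fin d → ℕ) = fun _ => 1 := by
        funext x; simp [hg_def]
      rw [h0, lintegral_one, measure_univ]
    have hterm : ∀ j : Fin d → ℕ, j ≠ 0 → ∫⁻ x, g j x ∂μ ≤ E * ∏ a, q ^ j a := by
      intro j hj
      set n := ∑ a, j a with hn_def
      have hn1 : 1 ≤ n := by
        rcases Function.ne_iff.1 hj with ⟨a, ha⟩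
        calc 1 ≤ j a := Nat.one_le_iff_ne_zero.2 ha
          _ ≤ n := Finset.single_le_sum (f := fun a => j a) (fun i _ => Nat.zero_le _)
              (Finset.mem_univ a)
      obtain ⟨hInt, hM⟩ := hmom j hj
      set C : ℝ := ∏ a, (|lam a| ^ j a / ((j a).factorial : ℝ)) with hC_def
      have hC0 : 0 ≤ C := Finset.prod_nonneg fun a _ => by positivity
      have hsplit : ∀ x : Fin d → ℝ,
          (∏ a, (|lam a| * |x a|) ^ j a / ((j a).factorial : ℝ)) = C * ∏ a, |x a| ^ j a := by
        intro x
        rw [hC_def, ← Finset.prod_mul_distrib]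
        exact Finset.prod_congr rfl fun a _ => by rw [mul_pow]; ring
      have hMnn : (0:ℝ) ≤ ∫ x, ∏ a, |x a| ^ j a ∂μ :=
        integral_nonneg fun x => Finset.prod_nonneg fun a _ => by positivity
      have hlin : ∫⁻ x, g j x ∂μ =
          ENNReal.ofReal (C * ∫ x, ∏ a, |x a| ^ j a ∂μ) := by
        have hg2 : g j = fun x =>
            ENNReal.ofReal C * ENNReal.ofReal (∏ a, |x a| ^ j a) := by
          funext x
          rw [hg_def]
          simp only
          rw [hsplit x, ENNReal.ofReal_mul hC0]
        rw [hg2, lintegral_const_mul' _ _ ENNReal.ofReal_ne_top,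
          ← MeasureTheory.ofReal_integral_eq_lintegral_ofReal hInt
            (Filter.Eventually.of_forall fun x => Finset.prod_nonneg fun a _ => by positivity),
          ← ENNReal.ofReal_mul hC0]
      have hCfact : C * ((∏ a, Nat.factorial (j a) : ℕ) : ℝ) = ∏ a, |lam a| ^ j a := by
        rw [hC_def, Nat.cast_prod, ← Finset.prod_mul_distrib]
        refine Finset.prod_congr rfl fun a _ => ?_
        exact div_mul_cancel₀ _ (by exact_mod_cast (Nat.factorial_pos (j a)).ne')
      have hprodlam : (∏ a, |lam a| ^ j a) ≤ L ^ n := by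
        calc (∏ a, |lam a| ^ j a) ≤ ∏ a, L ^ j a :=
              Finset.prod_le_prod (fun a _ => by positivity)
                (fun a _ => pow_le_pow_left₀ (abs_nonneg _) (habs a) _)
          _ = L ^ n := Finset.prod_pow_eq_pow_sum _ _ _
      have hreal : C * (((∏ a, Nat.factorial (j a) : ℕ) : ℝ) * S ^ n *
            (n : ℝ) ^ (-(κ * (n : ℝ)))) ≤ Real.exp (κ * u) * Real.exp (-κ) ^ n := by
        have h1 : C * (((∏ a, Nat.factorial (j a) : ℕ) : ℝ) * S ^ n *
            (n : ℝ) ^ (-(κ * (n : ℝ)))) =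
            (∏ a, |lam a| ^ j a) * S ^ n * (n : ℝ) ^ (-(κ * (n : ℝ))) := by
          rw [← hCfact]; ring
        rw [h1]
        have h2 : (∏ a, |lam a| ^ j a) * S ^ n ≤ t ^ n := by
          calc (∏ a, |lam a| ^ j a) * S ^ n ≤ L ^ n * S ^ n :=
                mul_le_mul_of_nonneg_right hprodlam (by positivity)
            _ = t ^ n := by rw [ht_def, mul_pow]; ring
        have h3 : (∏ a, |lam a| ^ j a) * S ^ n * (n : ℝ) ^ (-(κ * (n : ℝ))) ≤
            t ^ n * (n : ℝ) ^ (-(κ * (n : ℝ))) :=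
          mul_le_mul_of_nonneg_right h2 (Real.rpow_nonneg (Nat.cast_nonneg n) _)
        exact h3.trans (key_bound hκ ht hn1)
      calc ∫⁻ x, g j x ∂μ = ENNReal.ofReal (C * ∫ x, ∏ a, |x a| ^ j a ∂μ) := hlin
        _ ≤ ENNReal.ofReal (Real.exp (κ * u) * Real.exp (-κ) ^ n) :=
            ENNReal.ofReal_le_ofReal
              (le_trans (mul_le_mul_of_nonneg_left hM hC0) hreal)
        _ = E * q ^ n := by
            rw [ENNReal.ofReal_mul (Real.exp_pos _).le,
              ENNReal.ofReal_pow (Real.exp_pos _).le]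
        _ = E * ∏ a, q ^ j a := by
            rw [Finset.prod_pow_eq_pow_sum Finset.univ j q, ← hn_def]
    have hsum : ∑' j, ∫⁻ x, g j x ∂μ ≤ 1 + E * ENNReal.ofReal (r ^ d) := by
      rw [ENNReal.tsum_eq_add_tsum_ite (0 : Fin d → ℕ), hzero]
      refine add_le_add le_rfl ?_
      calc _ ≤ ∑' j : Fin d → ℕ, E * ∏ a, q ^ j a := by
            apply ENNReal.tsum_le_tsum
            intro j
            by_cases hj : j = 0
            · simp [hj]
            · simpa [hj] using hterm j hj
        _ = E * ∑' j : Fin d → ℕ, ∏ a, q ^ j a := ENNReal.tsum_mul_left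
        _ = E * ∏ _a : Fin d, ∑' k : ℕ, q ^ k := by
            rw [prod_tsum_eq d (fun _ k => q ^ k)]
        _ = E * ((1 - q)⁻¹) ^ d := by
            rw [ENNReal.tsum_geometric, Finset.prod_const, Finset.card_univ, Fintype.card_fin]
        _ = E * ENNReal.ofReal (r ^ d) := by
            congr 1
            have h1 : (1 : ℝ≥0∞) - q = ENNReal.ofReal (1 - Real.exp (-κ)) := by
              rw [hq_def, ENNReal.ofReal_sub _ (Real.exp_pos _).le, ENNReal.ofReal_one]
            rw [h1, ← ENNReal.ofReal_inv_of_pos hexp, ← ENNReal.ofReal_pow (by positivity),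
              ← hr_def]
    have hfinal : (1 : ℝ≥0∞) + E * ENNReal.ofReal (r ^ d) ≤
        ENNReal.ofReal (c * (1 + t ^ (((d : ℝ) + 1) / κ)) * Real.exp (κ * u)) := by
      rw [hE_def, ← ENNReal.ofReal_mul (Real.exp_pos _).le, ← ENNReal.ofReal_one,
        ← ENNReal.ofReal_add zero_le_one (by positivity)]
      apply ENNReal.ofReal_le_ofReal
      have h1e : 1 ≤ Real.exp (κ * u) := Real.one_le_exp (by positivity)
      have hs : 0 ≤ t ^ (((d : ℝ) + 1) / κ) := Real.rpow_nonneg ht _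
      have hrd : 0 < r ^ d := pow_pos hr d
      rw [hc_def]
      nlinarith [mul_nonneg hs (Real.exp_pos (κ * u)).le,
        mul_nonneg (mul_nonneg hrd.le hs) (Real.exp_pos (κ * u)).le,
        mul_nonneg hrd.le (Real.exp_pos (κ * u)).le]
    exact hint.trans (hsum.trans hfinal)
  refine ⟨hmain, ?_⟩
  refine ⟨c * (1 + ((d + 1).factorial : ℝ)), (κ + 1) * S ^ (1/κ),
    by positivity, mul_pos (by linarith) (Real.rpow_pos_of_pos hS _), ?_⟩
  intro lam
  refine (hmain lam).trans (ENNReal.ofReal_le_ofReal ?_)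
  set L := Real.sqrt (∑ a, lam a ^ 2) with hL_def
  have hL : 0 ≤ L := Real.sqrt_nonneg _
  have htL : 0 ≤ S * L := mul_nonneg hS.le hL
  set y := (S * L) ^ (1/κ) with hy_def
  have hy : 0 ≤ y := Real.rpow_nonneg htL _
  have hpoly : (S * L) ^ (((d : ℝ) + 1) / κ) = y ^ (d + 1) := by
    rw [hy_def, ← Real.rpow_natCast ((S * L) ^ (1/κ)) (d + 1), ← Real.rpow_mul htL]
    congr 1
    push_cast
    ring
  have hB : (κ + 1) * S ^ (1/κ) * L ^ (1/κ) = (κ + 1) * y := by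
    rw [hy_def, Real.mul_rpow hS.le hL]; ring
  have hyk : y ^ (d + 1) ≤ ((d + 1).factorial : ℝ) * Real.exp y := by
    have hsum := Real.sum_le_exp_of_nonneg hy (d + 2)
    have h2 : y ^ (d + 1) / ((d + 1).factorial : ℝ) ≤ Real.exp y :=
      le_trans (Finset.single_le_sum (f := fun i => y ^ i / (i.factorial : ℝ))
        (fun i _ => by positivity) (Finset.mem_range.2 (by omega))) hsum
    calc y ^ (d + 1) = ((d + 1).factorial : ℝ) * (y ^ (d + 1) / ((d + 1).factorial : ℝ)) := by
          field_simp
      _ ≤ ((d + 1).factorial : ℝ) * Real.exp y :=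
          mul_le_mul_of_nonneg_left h2 (Nat.cast_nonneg _)
  have h3 : 1 + y ^ (d + 1) ≤ (1 + ((d + 1).factorial : ℝ)) * Real.exp y := by
    have h1e : 1 ≤ Real.exp y := Real.one_le_exp hy
    nlinarith [(Nat.cast_pos (α := ℝ)).2 (Nat.factorial_pos (d + 1))]
  rw [hpoly, hB]
  calc c * (1 + y ^ (d + 1)) * Real.exp (κ * y)
      ≤ c * ((1 + ((d + 1).factorial : ℝ)) * Real.exp y) * Real.exp (κ * y) :=
        mul_le_mul_of_nonneg_right (mul_le_mul_of_nonneg_left h3 hc.le) (Real.exp_pos _).le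
    _ = c * (1 + ((d + 1).factorial : ℝ)) * Real.exp ((κ + 1) * y) := by
        rw [show (κ + 1) * y = y + κ * y by ring, Real.exp_add]; ring

end Stmt5
end

section
/- Let d1, d2 ≥ 1, ν > 0 and c_ν > 0. Let R* be a probability measure on ℝ^{d1} × ℝ^{d2} and let Q* = Q⁽¹⁾ ⊗ Q⁽²⁾ be a product of probability measures on ℝ^{d1} and ℝ^{d2} such that |Φ_{Q⁽¹⁾}(t1)| ≥ c_ν for all t1 ∈ [−ν,ν]^{d1} and |Φ_{Q⁽²⁾}(t2)| ≥ c_ν for all t2 ∈ [−ν,ν]^{d2}, where Φ denotes the characteristic function. Then for every bounded measurable function h on [−ν,ν]^{d1} × [−ν,ν]^{d2}, M(Φ_{R*} + h; ν | R*, Q*) ≥ (c_ν⁴/2) · M^lin(h, Φ_{R*}; ν) − c_ν⁴ · ∫_{[−ν,ν]^{d1} × [−ν,ν]^{d2}} |h(t1, 0) · h(0, t2)|² dt1 dt2. -/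
namespace Stmt6

open MeasureTheory

/-- The box [−ν,ν]^n. -/
def box (n : ℕ) (ν : ℝ) : Set (Fin n → ℝ) := {t | ∀ a, |t a| ≤ ν}

/-- Characteristic function of a measure on ℝ^n. -/
noncomputable def charFn {n : ℕ} (μ : Measure (Fin n → ℝ)) (t : Fin n → ℝ) : ℂ :=
  ∫ x, Complex.exp (Complex.I * ∑ a, (t a : ℂ) * (x a : ℂ)) ∂μ

/-- Characteristic function of a measure on ℝ^{d1} × ℝ^{d2}. -/
noncomputable def charFn2 {d1 d2 : ℕ} (R : Measure ((Fin d1 → ℝ) × (Fin d2 → ℝ)))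
    (t1 : Fin d1 → ℝ) (t2 : Fin d2 → ℝ) : ℂ :=
  ∫ x, Complex.exp (Complex.I * ((∑ a, (t1 a : ℂ) * (x.1 a : ℂ)) +
    ∑ a, (t2 a : ℂ) * (x.2 a : ℂ))) ∂ R

/-- The contrast function M(φ; ν | R, Q⁽¹⁾ ⊗ Q⁽²⁾). -/
noncomputable def contrast {d1 d2 : ℕ} (φ : ((Fin d1 → ℝ) × (Fin d2 → ℝ)) → ℂ) (ν : ℝ)
    (R : Measure ((Fin d1 → ℝ) × (Fin d2 → ℝ)))
    (Q1 : Measure (Fin d1 → ℝ)) (Q2 : Measure (Fin d2 → ℝ)) : ℝ :=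
  ∫ t in (box d1 ν) ×ˢ (box d2 ν),
    ‖φ t * charFn2 R t.1 0 * charFn2 R 0 t.2 -
      charFn2 R t.1 t.2 * φ (t.1, 0) * φ (0, t.2)‖ ^ 2 *
    ‖charFn Q1 t.1 * charFn Q2 t.2‖ ^ 2

/-- The linearized contrast M^lin(h, φ; ν). -/
noncomputable def Mlin {d1 d2 : ℕ} (h φ : ((Fin d1 → ℝ) × (Fin d2 → ℝ)) → ℂ) (ν : ℝ) : ℝ :=
  ∫ t in (box d1 ν) ×ˢ (box d2 ν),
    ‖h t * φ (t.1, 0) * φ (0, t.2) - φ t * h (t.1, 0) * φ (0, t.2) -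
      φ t * φ (t.1, 0) * h (0, t.2)‖ ^ 2

end Stmt6

/-!
With `φ = Φ_{R*} + h`, the integrand of the contrast is `‖L - Φ_{R*}(t) h(t1,0) h(0,t2)‖²` times the
weight `‖Φ_{Q⁽¹⁾}(t1) Φ_{Q⁽²⁾}(t2)‖² ≥ c_ν⁴`, where `L` is the integrand of `M^lin(h, Φ_{R*})`.
Since `‖Φ_{R*}‖ ≤ 1` and `‖x - y‖² ≥ ‖x‖²/2 - ‖y‖²`, the bound holds pointwise on the box. Every
integrand is built from bounded measurable functions, hence integrable on the compact box, and the
pointwise bound integrates.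
-/

lemma half_norm_sq_sub_norm_sq_le_norm_sub_sq {E : Type*} [SeminormedAddCommGroup E] (x y : E) :
    ‖x‖ ^ 2 / 2 - ‖y‖ ^ 2 ≤ ‖x - y‖ ^ 2 := by
  have : ‖x‖ ^ 2 ≤ (‖x - y‖ + ‖y‖) ^ 2 := by
    gcongr
    linarith [norm_sub_norm_le x y]
  nlinarith [sq_nonneg (‖x - y‖ - ‖y‖)]

lemma pow_four_le_norm_mul_sq {𝕜 : Type*} [NormedDivisionRing 𝕜] {c : ℝ} {z w : 𝕜} (hc : 0 ≤ c)
    (hz : c ≤ ‖z‖) (hw : c ≤ ‖w‖) : c ^ 4 ≤ ‖z * w‖ ^ 2 := by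
  rw [norm_mul, show c ^ 4 = (c * c) ^ 2 by ring]
  gcongr

namespace MeasureTheory

open scoped ENNReal

variable {α β E : Type*} [MeasurableSpace α] [MeasurableSpace β] [NormedAddCommGroup E]
  {μ : Measure α}

lemma memLp_top_comp_of_norm_le {f : β → E} {C : ℝ} (hf : StronglyMeasurable f)
    (hC : ∀ y, ‖f y‖ ≤ C) {g : α → β} (hg : Measurable g) : MemLp (fun x => f (g x)) ∞ μ :=
  memLp_top_of_bound (hf.comp_measurable hg).aestronglyMeasurable C (ae_of_all _ fun x => hC (g x))

lemma MemLp.norm_sq_of_top {f : α → E} (hf : MemLp f ∞ μ) : MemLp (fun x => ‖f x‖ ^ 2) ∞ μ :=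
  (hf.norm.mul' hf.norm).ae_eq (ae_of_all _ fun _ => (sq _).symm)

lemma MemLp.mul_of_top {𝕜 : Type*} [NormedRing 𝕜] {f g : α → 𝕜} (hf : MemLp f ∞ μ)
    (hg : MemLp g ∞ μ) : MemLp (fun x => f x * g x) ∞ μ :=
  hg.mul' hf

lemma mul_setIntegral_sub_mul_setIntegral_le {s : Set α} {f g F : α → ℝ} {a b : ℝ}
    (hf : IntegrableOn f s μ) (hg : IntegrableOn g s μ) (hF : IntegrableOn F s μ)
    (hs : MeasurableSet s) (h : ∀ x ∈ s, a * f x - b * g x ≤ F x) :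
    a * ∫ x in s, f x ∂μ - b * ∫ x in s, g x ∂μ ≤ ∫ x in s, F x ∂μ := by
  rw [← integral_const_mul, ← integral_const_mul, ← integral_sub (hf.const_mul a) (hg.const_mul b)]
  exact setIntegral_mono_on ((hf.const_mul a).sub (hg.const_mul b)) hF hs h

end MeasureTheory

namespace Stmt6

open MeasureTheory
open scoped ENNReal

section CharacteristicFunctions

open Complex

lemma norm_exp_I_mul_sum_ofReal_mul {ι : Type*} [Fintype ι] (t x : ι → ℝ) :
    ‖exp (I * ∑ a, (t a : ℂ) * (x a : ℂ))‖ = 1 := by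
  have : ∑ a, (t a : ℂ) * (x a : ℂ) = ((∑ a, t a * x a : ℝ) : ℂ) := by push_cast; rfl
  rw [this, norm_exp_I_mul_ofReal]

lemma norm_charFn_le_one {n : ℕ} (μ : Measure (Fin n → ℝ)) [IsProbabilityMeasure μ]
    (t : Fin n → ℝ) : ‖charFn μ t‖ ≤ 1 := by
  simpa [charFn] using norm_integral_le_of_norm_le_const (μ := μ)
    (ae_of_all _ fun x => (norm_exp_I_mul_sum_ofReal_mul t x).le)

lemma norm_charFn2_le_one {d1 d2 : ℕ} (R : Measure ((Fin d1 → ℝ) × (Fin d2 → ℝ)))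
    [IsProbabilityMeasure R] (t1 : Fin d1 → ℝ) (t2 : Fin d2 → ℝ) :
    ‖charFn2 R t1 t2‖ ≤ 1 := by
  refine (norm_integral_le_of_norm_le_const (μ := R) (C := 1) (ae_of_all _ fun x => ?_)).trans
    (by simp)
  have : (∑ a, (t1 a : ℂ) * (x.1 a : ℂ)) + ∑ a, (t2 a : ℂ) * (x.2 a : ℂ) =
      ((∑ a, t1 a * x.1 a + ∑ a, t2 a * x.2 a : ℝ) : ℂ) := by push_cast; rfl
  rw [this, norm_exp_I_mul_ofReal]

lemma stronglyMeasurable_charFn {n : ℕ} (μ : Measure (Fin n → ℝ)) [SFinite μ] :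
    StronglyMeasurable (charFn μ) :=
  (Continuous.stronglyMeasurable (by fun_prop : Continuous fun p : (Fin n → ℝ) × (Fin n → ℝ) =>
    exp (I * ∑ a, (p.1 a : ℂ) * (p.2 a : ℂ)))).integral_prod_right'

lemma stronglyMeasurable_charFn2 {d1 d2 : ℕ} (R : Measure ((Fin d1 → ℝ) × (Fin d2 → ℝ)))
    [SFinite R] : StronglyMeasurable fun t : (Fin d1 → ℝ) × (Fin d2 → ℝ) => charFn2 R t.1 t.2 :=
  (Continuous.stronglyMeasurable (by fun_prop : Continuous
    fun p : ((Fin d1 → ℝ) × (Fin d2 → ℝ)) × ((Fin d1 → ℝ) × (Fin d2 → ℝ)) =>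
      exp (I * ((∑ a, (p.1.1 a : ℂ) * (p.2.1 a : ℂ)) + ∑ a, (p.1.2 a : ℂ) * (p.2.2 a : ℂ)))))
    |>.integral_prod_right'

end CharacteristicFunctions

lemma isCompact_box (n : ℕ) (ν : ℝ) : IsCompact (box n ν) := by
  have : box n ν = Set.univ.pi fun _ => Set.Icc (-ν) ν := by
    ext t; simp [box, abs_le, Pi.le_def, forall_and]
  rw [this]
  exact isCompact_univ_pi fun _ => isCompact_Icc

lemma memLp_top_slices {d1 d2 : ℕ} {E : Type*} [NormedAddCommGroup E]
    {μ : Measure ((Fin d1 → ℝ) × (Fin d2 → ℝ))} {f : (Fin d1 → ℝ) × (Fin d2 → ℝ) → E} {C : ℝ}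
    (hf : StronglyMeasurable f) (hC : ∀ t, ‖f t‖ ≤ C) :
    MemLp f ∞ μ ∧ MemLp (fun t => f (t.1, 0)) ∞ μ ∧ MemLp (fun t => f (0, t.2)) ∞ μ :=
  ⟨memLp_top_comp_of_norm_le hf hC measurable_id,
    memLp_top_comp_of_norm_le hf hC (by fun_prop), memLp_top_comp_of_norm_le hf hC (by fun_prop)⟩

lemma norm_sq_contrast_integrand_ge {k q : ℝ} {p p₁ p₂ e e₁ e₂ : ℂ} (hp : ‖p‖ ≤ 1)
    (hk : 0 ≤ k) (hq : k ≤ q) :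
    k / 2 * ‖e * p₁ * p₂ - p * e₁ * p₂ - p * p₁ * e₂‖ ^ 2 - k * ‖e₁ * e₂‖ ^ 2 ≤
      ‖(p + e) * p₁ * p₂ - p * (p₁ + e₁) * (p₂ + e₂)‖ ^ 2 * q := by
  set lin := e * p₁ * p₂ - p * e₁ * p₂ - p * p₁ * e₂
  have hsplit : (p + e) * p₁ * p₂ - p * (p₁ + e₁) * (p₂ + e₂) = lin - p * (e₁ * e₂) := by ring
  have hquad : ‖p * (e₁ * e₂)‖ ^ 2 ≤ ‖e₁ * e₂‖ ^ 2 := by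
    gcongr
    rw [norm_mul]
    exact mul_le_of_le_one_left (norm_nonneg _) hp
  calc k / 2 * ‖lin‖ ^ 2 - k * ‖e₁ * e₂‖ ^ 2
      ≤ k * (‖lin‖ ^ 2 / 2 - ‖p * (e₁ * e₂)‖ ^ 2) := by
        nlinarith [mul_le_mul_of_nonneg_left hquad hk]
    _ ≤ k * ‖lin - p * (e₁ * e₂)‖ ^ 2 := by
        gcongr
        exact half_norm_sq_sub_norm_sq_le_norm_sub_sq _ _
    _ ≤ ‖(p + e) * p₁ * p₂ - p * (p₁ + e₁) * (p₂ + e₂)‖ ^ 2 * q := by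
        rw [hsplit, mul_comm]
        gcongr

theorem stmt6_general (d1 d2 : ℕ)
    (ν cν : ℝ) (hcν : 0 < cν)
    (R : Measure ((Fin d1 → ℝ) × (Fin d2 → ℝ))) [IsProbabilityMeasure R]
    (Q1 : Measure (Fin d1 → ℝ)) (Q2 : Measure (Fin d2 → ℝ))
    [IsProbabilityMeasure Q1] [IsProbabilityMeasure Q2]
    (hQ1 : ∀ t1 ∈ box d1 ν, cν ≤ ‖charFn Q1 t1‖)
    (hQ2 : ∀ t2 ∈ box d2 ν, cν ≤ ‖charFn Q2 t2‖)
    (h : ((Fin d1 → ℝ) × (Fin d2 → ℝ)) → ℂ) (hmeas : Measurable h)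
    (C : ℝ) (hbd : ∀ t, ‖h t‖ ≤ C) :
    contrast (fun t => charFn2 R t.1 t.2 + h t) ν R Q1 Q2 ≥
      cν ^ 4 / 2 * Mlin h (fun t => charFn2 R t.1 t.2) ν -
      cν ^ 4 * ∫ t in (box d1 ν) ×ˢ (box d2 ν),
        ‖h (t.1, 0) * h (0, t.2)‖ ^ 2 := by
  set s := box d1 ν ×ˢ box d2 ν
  have hs : IsCompact s := (isCompact_box d1 ν).prod (isCompact_box d2 ν)
  have : IsFiniteMeasure (volume.restrict s) := isFiniteMeasure_restrict.2 hs.measure_lt_top.ne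
  obtain ⟨hΦ, hΦ₁, hΦ₂⟩ := memLp_top_slices (μ := volume.restrict s)
    (stronglyMeasurable_charFn2 R) fun t => norm_charFn2_le_one R t.1 t.2
  obtain ⟨hh, hh₁, hh₂⟩ := memLp_top_slices (μ := volume.restrict s) hmeas.stronglyMeasurable hbd
  have hQ := (memLp_top_comp_of_norm_le (μ := volume.restrict s) (stronglyMeasurable_charFn Q1)
      (norm_charFn_le_one Q1) measurable_fst).mul_of_top
    (memLp_top_comp_of_norm_le (stronglyMeasurable_charFn Q2) (norm_charFn_le_one Q2) measurable_snd)
  have hlin := (((hh.mul_of_top hΦ₁).mul_of_top hΦ₂).sub ((hΦ.mul_of_top hh₁).mul_of_top hΦ₂)).sub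
    ((hΦ.mul_of_top hΦ₁).mul_of_top hh₂) |>.norm_sq_of_top
  have hquad := (hh₁.mul_of_top hh₂).norm_sq_of_top
  have hcontrast := ((((hΦ.add hh).mul_of_top hΦ₁).mul_of_top hΦ₂).sub
    ((hΦ.mul_of_top (hΦ₁.add hh₁)).mul_of_top (hΦ₂.add hh₂))).norm_sq_of_top.mul_of_top
      hQ.norm_sq_of_top
  refine mul_setIntegral_sub_mul_setIntegral_le (hlin.integrable le_top)
    (hquad.integrable le_top) (hcontrast.integrable le_top) hs.measurableSet ?_
  rintro t ⟨ht₁, ht₂⟩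
  exact norm_sq_contrast_integrand_ge (norm_charFn2_le_one R _ _) (by positivity)
    (pow_four_le_norm_mul_sq hcν.le (hQ1 _ ht₁) (hQ2 _ ht₂))

theorem stmt6 (d1 d2 : ℕ) (hd1 : 1 ≤ d1) (hd2 : 1 ≤ d2)
    (ν cν : ℝ) (hν : 0 < ν) (hcν : 0 < cν)
    (R : Measure ((Fin d1 → ℝ) × (Fin d2 → ℝ))) [IsProbabilityMeasure R]
    (Q1 : Measure (Fin d1 → ℝ)) (Q2 : Measure (Fin d2 → ℝ))
    [IsProbabilityMeasure Q1] [IsProbabilityMeasure Q2]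
    (hQ1 : ∀ t1 ∈ box d1 ν, cν ≤ ‖charFn Q1 t1‖)
    (hQ2 : ∀ t2 ∈ box d2 ν, cν ≤ ‖charFn Q2 t2‖)
    (h : ((Fin d1 → ℝ) × (Fin d2 → ℝ)) → ℂ) (hmeas : Measurable h)
    (C : ℝ) (hbd : ∀ t, ‖h t‖ ≤ C) :
    contrast (fun t => charFn2 R t.1 t.2 + h t) ν R Q1 Q2 ≥
      cν ^ 4 / 2 * Mlin h (fun t => charFn2 R t.1 t.2) ν -
      cν ^ 4 * ∫ t in (box d1 ν) ×ˢ (box d2 ν),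
        ‖h (t.1, 0) * h (0, t.2)‖ ^ 2 :=
  stmt6_general d1 d2 ν cν hcν R Q1 Q2 hQ1 hQ2 h hmeas C hbd

end Stmt6
end

section
/- Let κ > 0 and let d ≥ 0 be an integer. Set x₀ = ((d + 4/3)/κ)^κ. Then for all x > 0, Σ_{m ≥ 1} m^d · x^m · m^{−κm} ≤ 6 · (max(x, x₀))^{(d+1)/κ} · exp(κ · (max(x, x₀))^{1/κ}). -/
/-!
Put `y = max(x, x₀)^(1/κ)` and `n = m + 1`. From `t ≤ exp (t - 1)` at `t = y/n` one gets
`x^n n^(-κn) ≤ (y/n)^(κn) ≤ exp (κ(y - n))`, and from `t^d ≤ d! exp t` one gets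
`n^d ≤ d! (2/κ)^d exp (κn/2)`. Hence the `n`-th term is at most `d! (2/κ)^d exp (κy) exp (-κn/2)`,
a geometric series summing to at most `d! (2/κ)^(d+1) exp (κy)`. The choice of `x₀` makes
`(d + 4/3)/κ ≤ y`, and `2^(d+1) d! ≤ 6 (d + 4/3)^(d+1)` finishes the estimate.
-/

open Real Nat

lemma two_pow_mul_factorial_le {c : ℝ} (hc : 1 / 3 ≤ c) (d : ℕ) :
    2 ^ (d + 1) * (d ! : ℝ) ≤ 6 * (d + c) ^ (d + 1) := by
  induction d with
  | zero => norm_num; linarith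
  | succ d ih =>
    set a : ℝ := d + c
    have ha : 0 ≤ a := by positivity
    have hbern : a ^ (d + 1) + (d + 1) * a ^ d ≤ (a + 1) ^ (d + 1) := by
      simpa using pow_add_mul_le_add_pow (b := 1) ha (by positivity) (d + 1)
    have hstep : 2 * (d + 1) * a ^ (d + 1) ≤ (a + 1) ^ (d + 2) :=
      calc 2 * (d + 1) * a ^ (d + 1) = a ^ d * (2 * (d + 1) * a) := by ring
        _ ≤ a ^ d * ((a + (d + 1)) * (a + 1)) := by
          gcongr ?_ * ?_
          nlinarith
        _ = (a ^ (d + 1) + (d + 1) * a ^ d) * (a + 1) := by ring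
        _ ≤ (a + 1) ^ (d + 1) * (a + 1) := by gcongr
        _ = (a + 1) ^ (d + 2) := by ring
    calc 2 ^ (d + 1 + 1) * ((d + 1)! : ℝ) = 2 * (d + 1) * (2 ^ (d + 1) * d !) := by
          push_cast [factorial_succ]; ring
      _ ≤ 2 * (d + 1) * (6 * a ^ (d + 1)) := by gcongr
      _ ≤ 6 * (a + 1) ^ (d + 2) := by linarith
      _ = 6 * ((d + 1 : ℕ) + c) ^ (d + 1 + 1) := by push_cast; ring

lemma pow_le_factorial_mul_exp {c t : ℝ} (hc : 0 < c) (ht : 0 ≤ t) (d : ℕ) :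
    t ^ d ≤ d ! / c ^ d * exp (c * t) := by
  have h := pow_div_factorial_le_exp _ (mul_nonneg hc.le ht) d
  rw [div_le_iff₀ (by positivity), mul_pow] at h
  rw [div_mul_eq_mul_div, le_div_iff₀ (by positivity)]
  linarith

lemma rpow_mul_rpow_neg_le_exp {κ y n : ℝ} (hκ : 0 ≤ κ) (hy : 0 < y) (hn : 0 < n) :
    (y ^ κ) ^ n * n ^ (-(κ * n)) ≤ exp (κ * (y - n)) := by
  have hyn : y / n ≤ exp (y / n - 1) := by linarith [add_one_le_exp (y / n - 1)]
  calc (y ^ κ) ^ n * n ^ (-(κ * n)) = (y / n) ^ (κ * n) := by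
        rw [← rpow_mul hy.le, rpow_neg hn.le, div_rpow hy.le hn.le, div_eq_mul_inv]
    _ ≤ exp (y / n - 1) ^ (κ * n) := by gcongr
    _ = exp (κ * (y - n)) := by
        rw [← exp_mul]; congr 1; field_simp

lemma hasSum_exp_neg_mul_succ {c : ℝ} (hc : 0 < c) :
    HasSum (fun m : ℕ => exp (-(c * (m + 1)))) (exp c - 1)⁻¹ := by
  have hr : exp (-c) < 1 := exp_lt_one_iff.mpr (by linarith)
  have hterm : (fun m : ℕ => exp (-(c * (m + 1)))) = fun m => exp (-c) * exp (-c) ^ m := by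
    funext m
    rw [← exp_nat_mul, ← exp_add]; ring_nf
  have hval : (exp c - 1)⁻¹ = exp (-c) * (1 - exp (-c))⁻¹ := by
    have : exp c - 1 ≠ 0 := by linarith [add_one_lt_exp hc.ne']
    rw [exp_neg]
    field_simp
  rw [hterm, hval]
  exact (hasSum_geometric_of_lt_one (exp_pos _).le hr).mul_left (exp (-c))

lemma factorial_div_half_pow_le {κ c : ℝ} (hκ : 0 < κ) (hc : 1 / 3 ≤ c) (d : ℕ) :
    d ! / (κ / 2) ^ (d + 1) ≤ 6 * ((d + c) / κ) ^ (d + 1) := by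
  have h := two_pow_mul_factorial_le hc d
  rw [div_pow, div_pow, div_div_eq_mul_div, mul_div_assoc', mul_comm (d ! : ℝ)]
  gcongr

lemma pow_mul_pow_mul_rpow_neg_le {κ x y : ℝ} (hκ : 0 < κ) (hx : 0 ≤ x) (hy : 0 < y)
    (hxy : x ≤ y ^ κ) (d m : ℕ) :
    ((m : ℝ) + 1) ^ d * x ^ (m + 1) * ((m : ℝ) + 1) ^ (-(κ * ((m : ℝ) + 1))) ≤
      d ! / (κ / 2) ^ d * exp (κ * y) * exp (-(κ / 2 * ((m : ℝ) + 1))) := by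
  set n : ℝ := (m : ℝ) + 1
  have hn : 0 < n := by positivity
  have hpow : x ^ (m + 1) ≤ (y ^ κ) ^ n := by
    rw [show n = ((m + 1 : ℕ) : ℝ) by push_cast; rfl, rpow_natCast]
    gcongr
  calc n ^ d * x ^ (m + 1) * n ^ (-(κ * n)) ≤ n ^ d * ((y ^ κ) ^ n * n ^ (-(κ * n))) := by
        rw [mul_assoc]; gcongr
    _ ≤ n ^ d * exp (κ * (y - n)) := by gcongr; exact rpow_mul_rpow_neg_le_exp hκ.le hy hn
    _ ≤ d ! / (κ / 2) ^ d * exp (κ / 2 * n) * exp (κ * (y - n)) := by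
        gcongr; exact pow_le_factorial_mul_exp (by positivity) hn.le d
    _ = d ! / (κ / 2) ^ d * exp (κ * y) * exp (-(κ / 2 * n)) := by
        rw [mul_assoc, mul_assoc, ← exp_add, ← exp_add]; ring_nf

lemma summable_and_tsum_pow_mul_pow_mul_rpow_neg_le {κ x y : ℝ} (hκ : 0 < κ) (hx : 0 ≤ x)
    (hy : 0 < y) (hxy : x ≤ y ^ κ) (d : ℕ) :
    Summable (fun m : ℕ =>
      ((m : ℝ) + 1) ^ d * x ^ (m + 1) * ((m : ℝ) + 1) ^ (-(κ * ((m : ℝ) + 1)))) ∧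
    (∑' m : ℕ, ((m : ℝ) + 1) ^ d * x ^ (m + 1) * ((m : ℝ) + 1) ^ (-(κ * ((m : ℝ) + 1)))) ≤
      d ! / (κ / 2) ^ (d + 1) * exp (κ * y) := by
  set A : ℝ := d ! / (κ / 2) ^ d * exp (κ * y)
  have hκ2 : 0 < κ / 2 := by positivity
  have hgeom := (hasSum_exp_neg_mul_succ hκ2).mul_left A
  have hle := pow_mul_pow_mul_rpow_neg_le hκ hx hy hxy d
  have hnonneg (m : ℕ) :
      0 ≤ ((m : ℝ) + 1) ^ d * x ^ (m + 1) * ((m : ℝ) + 1) ^ (-(κ * ((m : ℝ) + 1))) := by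
    positivity
  have hsum := Summable.of_nonneg_of_le hnonneg hle hgeom.summable
  refine ⟨hsum, ?_⟩
  calc _ ≤ A * (exp (κ / 2) - 1)⁻¹ := hasSum_le hle hsum.hasSum hgeom
    _ ≤ A * (κ / 2)⁻¹ := by gcongr; linarith [add_one_le_exp (κ / 2)]
    _ = d ! / (κ / 2) ^ (d + 1) * exp (κ * y) := by
        simp only [A]; rw [pow_succ]; field_simp

theorem stmt14 (κ : ℝ) (hκ : 0 < κ) (d : ℕ) (x : ℝ) (hx : 0 < x) :
    Summable (fun m : ℕ =>
      ((m : ℝ) + 1) ^ d * x ^ (m + 1) * ((m : ℝ) + 1) ^ (-(κ * ((m : ℝ) + 1)))) ∧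
    (∑' m : ℕ, ((m : ℝ) + 1) ^ d * x ^ (m + 1) * ((m : ℝ) + 1) ^ (-(κ * ((m : ℝ) + 1)))) ≤
      6 * (max x ((((d : ℝ) + 4 / 3) / κ) ^ κ)) ^ (((d : ℝ) + 1) / κ) *
        Real.exp (κ * (max x ((((d : ℝ) + 4 / 3) / κ) ^ κ)) ^ (1 / κ)) := by
  set X := max x ((((d : ℝ) + 4 / 3) / κ) ^ κ)
  have hX : 0 < X := hx.trans_le (le_max_left _ _)
  set y := X ^ (1 / κ) with hy
  have hyκ : y ^ κ = X := by rw [hy, one_div, rpow_inv_rpow hX.le hκ.ne']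
  have hby : ((d : ℝ) + 4 / 3) / κ ≤ y :=
    calc ((d : ℝ) + 4 / 3) / κ = ((((d : ℝ) + 4 / 3) / κ) ^ κ) ^ (1 / κ) := by
          rw [one_div, rpow_rpow_inv (by positivity) hκ.ne']
      _ ≤ y := rpow_le_rpow (by positivity) (le_max_right _ _) (by positivity)
  have hXd : X ^ (((d : ℝ) + 1) / κ) = y ^ (d + 1) := by
    rw [← rpow_natCast, ← rpow_mul hX.le]; push_cast; ring_nf
  have hxy : x ≤ y ^ κ := hyκ ▸ le_max_left _ _
  obtain ⟨hsum, hle⟩ :=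
    summable_and_tsum_pow_mul_pow_mul_rpow_neg_le hκ hx.le (rpow_pos_of_pos hX _) hxy d
  refine ⟨hsum, hle.trans ?_⟩
  rw [hXd]
  calc d ! / (κ / 2) ^ (d + 1) * exp (κ * y)
      ≤ 6 * (((d : ℝ) + 4 / 3) / κ) ^ (d + 1) * exp (κ * y) := by
        gcongr; exact factorial_div_half_pow_le hκ (by norm_num) d
    _ ≤ 6 * y ^ (d + 1) * exp (κ * y) := by gcongr
end

section
/- Let κ > 0 and let d ≥ 1 be an integer. Set u₀ = (4/(3κ))^κ. Then for all u > 0, f_κ(u) = Σ_{m ≥ 1} (m + d/κ)^{−κm} · u^m ≤ 6 · (max(u, u₀))^{1/κ} · exp(κ · (max(u, u₀))^{1/κ}). -/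
/- STATEMENT 15: For κ > 0, an integer d ≥ 1 and u > 0, with u₀ = (4/(3κ))^κ,
   f_κ(u) = Σ_{m ≥ 1} (m + d/κ)^{−κm} u^m ≤ 6 (max u u₀)^{1/κ} exp(κ (max u u₀)^{1/κ}). -/

/-- The function f_κ(u) = Σ_{m ≥ 1} (m + d/κ)^{−κm} u^m. -/
noncomputable def fkappa (d : ℕ) (κ u : ℝ) : ℝ :=
  ∑' m : ℕ, (((m : ℝ) + 1) + (d : ℝ) / κ) ^ (-(κ * ((m : ℝ) + 1))) * u ^ (m + 1)

/-! With `B = (max u u₀) ^ (1/κ)` we have `u ≤ B ^ κ`, so dropping the shift `d/κ` the `m`-th term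
is at most `(B/m) ^ (κ m)`, and `log x ≤ x - 1` turns this into `exp (κ B) · e^{-κ m}`. Summing the
geometric series gives `f_κ(u) ≤ exp (κ B) / (e^κ - 1) ≤ exp (κ B) / κ`, and `1/κ ≤ 6 B` because
`B ≥ u₀ ^ (1/κ) = 4/(3κ)`. -/

open Real

lemma div_rpow_mul_le_exp {B n κ : ℝ} (hB : 0 < B) (hn : 0 < n) (hκ : 0 ≤ κ) :
    (B / n) ^ (κ * n) ≤ exp (κ * (B - n)) := by
  rw [rpow_def_of_pos (div_pos hB hn), exp_le_exp]
  calc log (B / n) * (κ * n) ≤ (B / n - 1) * (κ * n) := by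
        gcongr
        exact log_le_sub_one_of_pos (div_pos hB hn)
    _ = κ * (B - n) := by field_simp

lemma shifted_term_le {κ c u B : ℝ} (hκ : 0 ≤ κ) (hc : 0 ≤ c) (hu : 0 ≤ u) (hB : 0 < B)
    (huB : u ≤ B ^ κ) (m : ℕ) :
    (((m : ℝ) + 1) + c) ^ (-(κ * ((m : ℝ) + 1))) * u ^ (m + 1)
      ≤ exp (κ * B) * exp (-κ) ^ (m + 1) := by
  have hn : (0 : ℝ) < m + 1 := by positivity
  have hpow : (B ^ κ) ^ (m + 1) = B ^ (κ * ((m : ℝ) + 1)) := by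
    rw [← rpow_natCast, ← rpow_mul hB.le]
    push_cast
    rfl
  calc (((m : ℝ) + 1) + c) ^ (-(κ * ((m : ℝ) + 1))) * u ^ (m + 1)
      ≤ ((m : ℝ) + 1) ^ (-(κ * ((m : ℝ) + 1))) * (B ^ κ) ^ (m + 1) := by
        gcongr ?_ * ?_
        · exact rpow_le_rpow_of_nonpos hn (by linarith) (by nlinarith)
        · exact pow_le_pow_left₀ hu huB _
    _ = (B / ((m : ℝ) + 1)) ^ (κ * ((m : ℝ) + 1)) := by
        rw [hpow, div_rpow hB.le hn.le, rpow_neg hn.le, div_eq_inv_mul]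
    _ ≤ exp (κ * (B - ((m : ℝ) + 1))) := div_rpow_mul_le_exp hB hn hκ
    _ = exp (κ * B) * exp (-κ) ^ (m + 1) := by
        rw [← exp_nat_mul, ← exp_add]
        push_cast
        ring_nf

lemma tsum_exp_neg_pow_succ_le {κ : ℝ} (hκ : 0 < κ) :
    Summable (fun m : ℕ => exp (-κ) ^ (m + 1)) ∧ ∑' m : ℕ, exp (-κ) ^ (m + 1) ≤ κ⁻¹ := by
  have hr0 : 0 ≤ exp (-κ) := (exp_pos _).le
  have hr1 : exp (-κ) < 1 := exp_lt_one_iff.mpr (neg_lt_zero.mpr hκ)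
  have hsum := summable_geometric_of_lt_one hr0 hr1
  refine ⟨(summable_nat_add_iff 1).mpr hsum, ?_⟩
  have hexp : κ < exp κ - 1 := by linarith [add_one_lt_exp hκ.ne']
  calc ∑' m : ℕ, exp (-κ) ^ (m + 1) = (exp κ - 1)⁻¹ := by
        simp_rw [pow_succ, tsum_mul_right, tsum_geometric_of_lt_one hr0 hr1, exp_neg]
        field_simp
    _ ≤ κ⁻¹ := inv_anti₀ hκ hexp.le

lemma summable_shifted_series_and_tsum_le {κ c u B : ℝ} (hκ : 0 < κ) (hc : 0 ≤ c)
    (hu : 0 ≤ u) (hB : 0 < B) (huB : u ≤ B ^ κ) :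
    Summable (fun m : ℕ => (((m : ℝ) + 1) + c) ^ (-(κ * ((m : ℝ) + 1))) * u ^ (m + 1)) ∧
      ∑' m : ℕ, (((m : ℝ) + 1) + c) ^ (-(κ * ((m : ℝ) + 1))) * u ^ (m + 1)
        ≤ exp (κ * B) / κ := by
  obtain ⟨hgeom, hgeom_le⟩ := tsum_exp_neg_pow_succ_le hκ
  have hterm := shifted_term_le hκ.le hc hu hB huB
  have hmaj := hgeom.mul_left (exp (κ * B))
  have hnonneg : ∀ m : ℕ, 0 ≤ (((m : ℝ) + 1) + c) ^ (-(κ * ((m : ℝ) + 1))) * u ^ (m + 1) :=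
    fun m => by positivity
  have hsum := hmaj.of_nonneg_of_le hnonneg hterm
  refine ⟨hsum, ?_⟩
  calc _ ≤ ∑' m : ℕ, exp (κ * B) * exp (-κ) ^ (m + 1) := hsum.tsum_le_tsum hterm hmaj
    _ = exp (κ * B) * ∑' m : ℕ, exp (-κ) ^ (m + 1) := tsum_mul_left
    _ ≤ exp (κ * B) * κ⁻¹ := by gcongr
    _ = exp (κ * B) / κ := (div_eq_mul_inv _ _).symm

theorem stmt15_general (κ : ℝ) (hκ : 0 < κ) (d : ℕ) (u : ℝ) (hu : 0 < u) :
    Summable (fun m : ℕ =>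
      (((m : ℝ) + 1) + (d : ℝ) / κ) ^ (-(κ * ((m : ℝ) + 1))) * u ^ (m + 1)) ∧
    fkappa d κ u ≤
      6 * (max u ((4 / (3 * κ)) ^ κ)) ^ (1 / κ) *
        Real.exp (κ * (max u ((4 / (3 * κ)) ^ κ)) ^ (1 / κ)) := by
  set U := max u ((4 / (3 * κ)) ^ κ)
  set B := U ^ (1 / κ)
  have hU : 0 < U := hu.trans_le (le_max_left _ _)
  have hB : 0 < B := rpow_pos_of_pos hU _
  have huB : u ≤ B ^ κ := by
    have hBκ : B ^ κ = U := by
      simp only [B, one_div]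
      exact rpow_inv_rpow hU.le hκ.ne'
    exact hBκ ▸ le_max_left _ _
  have hB_ge : 4 / (3 * κ) ≤ B := by
    rw [← rpow_rpow_inv (by positivity : (0 : ℝ) ≤ 4 / (3 * κ)) hκ.ne', ← one_div]
    exact rpow_le_rpow (by positivity) (le_max_right _ _) (by positivity)
  have hinv_le : κ⁻¹ ≤ 6 * B := by
    rw [div_le_iff₀ (by positivity)] at hB_ge
    rw [inv_le_iff_one_le_mul₀ hκ]
    nlinarith
  obtain ⟨hsum, hle⟩ :=
    summable_shifted_series_and_tsum_le hκ (by positivity : (0 : ℝ) ≤ d / κ) hu.le hB huB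
  refine ⟨hsum, hle.trans ?_⟩
  rw [div_eq_inv_mul]
  gcongr

theorem stmt15 (κ : ℝ) (hκ : 0 < κ) (d : ℕ) (hd : 1 ≤ d) (u : ℝ) (hu : 0 < u) :
    Summable (fun m : ℕ =>
      (((m : ℝ) + 1) + (d : ℝ) / κ) ^ (-(κ * ((m : ℝ) + 1))) * u ^ (m + 1)) ∧
    fkappa d κ u ≤
      6 * (max u ((4 / (3 * κ)) ^ κ)) ^ (1 / κ) *
        Real.exp (κ * (max u ((4 / (3 * κ)) ^ κ)) ^ (1 / κ)) :=
  stmt15_general κ hκ d u hu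
end

section
/- Let d ≥ 1, κ > 0, S > 0 and set x₀ = max(1, ((d + 4/3)/κ)^κ). Then for all ν > 0, every φ ∈ Υ_{κ,S} and every t ∈ [−ν,ν]^d, |φ(t)| ≤ 7 · (max(Sν, x₀))^{(d+1)/κ} · exp(κ · (max(Sν, x₀))^{1/κ}). In other words, C_Υ(κ,S,ν) = sup_{φ ∈ Υ_{κ,S}} sup_{t ∈ [−ν,ν]^d} |φ(t)| ≤ 7 · (max(Sν, x₀))^{(d+1)/κ} · exp(κ · (max(Sν, x₀))^{1/κ}). -/
/-!
Write `n = ‖i‖₁` and `x = max(Sν, x₀)`. On the box, the `i`-th term of the series is at most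
`x^n n^{-κn}`, and with `y = x^{1/κ}` the tangent-line bound `log(y/n) ≤ y/n - 1` gives
`x^n n^{-κn} ≤ e^{κy} e^{-κn}`. Summing this geometric bound over `ℕ^d` gives
`|φ(t)| ≤ e^{κy} (1 - e^{-κ})^{-d}`, and `x ≥ ((d + 4/3)/κ)^κ` makes `(1 - e^{-κ})^{-d} ≤ 7 x^{(d+1)/κ}`:
for `κ ≤ d + 4/3` through `(1 - e^{-κ})⁻¹ ≤ (κ + 1)/κ`, and for larger `κ` through Bernoulli's
inequality.
-/

namespace Stmt16

/-- Multi-indices for d variables. -/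
abbrev Idx (d : ℕ) := Fin d → ℕ

/-- ‖i‖₁ = Σ_a i_a. -/
def degSum {d : ℕ} (i : Idx d) : ℕ := ∑ a, i a

/-- The monomial z ↦ ∏_a z_a^{i_a}. -/
noncomputable def monom {d : ℕ} (i : Idx d) (z : Fin d → ℂ) : ℂ := ∏ a, z a ^ i a

/-- φ is given everywhere on ℂ^d by the absolutely convergent power series with
coefficients c. -/
def HasCoeffs {d : ℕ} (c : Idx d → ℂ) (φ : (Fin d → ℂ) → ℂ) : Prop :=
  ∀ z : Fin d → ℂ,
    Summable (fun i : Idx d => ‖c i * monom i z‖) ∧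
    HasSum (fun i : Idx d => c i * monom i z) (φ z)

/-- The coefficient conditions defining the class Υ_{κ,S}: c_0 = 1,
conj(c_i) = (−1)^{‖i‖₁} c_i, and |c_i| ≤ S^{‖i‖₁} ‖i‖₁^{−κ‖i‖₁} for i ≠ 0. -/
def CoeffBound {d : ℕ} (κ S : ℝ) (c : Idx d → ℂ) : Prop :=
  c 0 = 1 ∧
  (∀ i : Idx d, (starRingEnd ℂ) (c i) = (-1 : ℂ) ^ degSum i * c i) ∧
  ∀ i : Idx d, i ≠ 0 →
    ‖c i‖ ≤ S ^ degSum i * (degSum i : ℝ) ^ (-(κ * (degSum i : ℝ)))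

open Real

lemma hasSum_pow_degSum {q : ℝ} (h0 : 0 ≤ q) (h1 : q < 1) (d : ℕ) :
    HasSum (fun i : Idx d => q ^ degSum i) ((1 - q)⁻¹ ^ d) := by
  induction d with
  | zero => simp [degSum]
  | succ d ih =>
    have hgeom := hasSum_geometric_of_lt_one h0 h1
    have hsummable := Summable.mul_of_nonneg (f := fun n : ℕ => q ^ n)
      (g := fun i : Idx d => q ^ degSum i) hgeom.summable ih.summable
      (fun _ => pow_nonneg h0 _) (fun _ => pow_nonneg h0 _)
    have hcons : (fun i : Idx (d + 1) => q ^ degSum i) ∘ Fin.consEquiv (fun _ => ℕ) =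
        fun p => q ^ p.1 * q ^ degSum p.2 := by
      funext p
      simp [degSum, Fin.consEquiv, Fin.sum_cons, pow_add]
    have hprod := hgeom.mul ih hsummable
    rwa [pow_succ', ← (Fin.consEquiv fun _ => ℕ).hasSum_iff, hcons]

lemma rpow_pow_mul_rpow_neg_le {κ y : ℝ} (hκ : 0 < κ) (hy : 0 < y) (n : ℕ) :
    (y ^ κ) ^ n * (n : ℝ) ^ (-(κ * n)) ≤ exp (κ * y) * exp (-κ) ^ n := by
  rcases n.eq_zero_or_pos with rfl | hn
  · simpa using one_le_exp (by positivity)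
  have hn0 : (0 : ℝ) < n := by exact_mod_cast hn
  have htangent : n * (log y - log n + 1) ≤ y := by
    have h := log_le_sub_one_of_pos (div_pos hy hn0)
    rw [log_div hy.ne' hn0.ne', le_sub_iff_add_le, le_div_iff₀ hn0] at h
    linarith
  calc (y ^ κ) ^ n * (n : ℝ) ^ (-(κ * n))
      = exp (κ * (n * (log y - log n + 1)) + n * (-κ)) := by
        rw [← rpow_natCast, ← rpow_mul hy.le, rpow_def_of_pos hy, rpow_def_of_pos hn0,
          ← exp_add]
        ring_nf
    _ ≤ exp (κ * y + n * (-κ)) := by gcongr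
    _ = exp (κ * y) * exp (-κ) ^ n := by rw [exp_add, exp_nat_mul]

lemma inv_one_sub_exp_neg_le {κ : ℝ} (hκ : 0 < κ) : (1 - exp (-κ))⁻¹ ≤ (κ + 1) / κ := by
  have hexp : exp (-κ) ≤ (κ + 1)⁻¹ := by
    rw [exp_neg]
    exact inv_anti₀ (by positivity) (by linarith [add_one_le_exp κ])
  rw [← inv_div]
  refine inv_anti₀ (by positivity) ?_
  calc κ / (κ + 1) = 1 - (κ + 1)⁻¹ := by field_simp; ring
    _ ≤ 1 - exp (-κ) := by linarith

lemma inv_one_sub_exp_neg_pow_le_of_le {d : ℕ} {κ : ℝ} (hκ : 0 < κ) (h : κ ≤ d + 4 / 3) :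
    (1 - exp (-κ))⁻¹ ^ d ≤ 3 * (((d : ℝ) + 4 / 3) / κ) ^ (d + 1) := by
  set B : ℝ := d + 4 / 3 with hB
  have hB0 : 0 < B := by positivity
  have hR : 1 ≤ B / κ := (one_le_div hκ).2 h
  have hsmall : (1 + 1 / B) ^ d ≤ 3 := calc
    (1 + 1 / B) ^ d ≤ exp (1 / B) ^ d := by
      gcongr
      linarith [add_one_le_exp (1 / B)]
    _ = exp (d / B) := by rw [← exp_nat_mul, mul_one_div]
    _ ≤ exp 1 := exp_le_exp.2 <| (div_le_one hB0).2 (by linarith)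
    _ ≤ 3 := by linarith [exp_one_lt_d9]
  calc (1 - exp (-κ))⁻¹ ^ d ≤ ((κ + 1) / κ) ^ d := by
        gcongr
        · exact inv_nonneg.2 (by linarith [exp_lt_one_iff.2 (neg_lt_zero.2 hκ)])
        · exact inv_one_sub_exp_neg_le hκ
    _ ≤ ((B + 1) / κ) ^ d := by gcongr
    _ = (1 + 1 / B) ^ d * (B / κ) ^ d := by rw [← mul_pow]; congr 1; field_simp
    _ ≤ 3 * (B / κ) ^ (d + 1) := by
        gcongr
        omega

lemma inv_one_sub_exp_neg_pow_le_seven {d : ℕ} {κ : ℝ} (h : d + 4 / 3 < κ) :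
    (1 - exp (-κ))⁻¹ ^ d ≤ 7 := by
  have hdq : (d : ℝ) * exp (-κ) ≤ 6 / 7 := calc
    (d : ℝ) * exp (-κ) ≤ exp (d - 1) * exp (-d - 4 / 3) := by
      gcongr
      · linarith [add_one_le_exp ((d : ℝ) - 1)]
      · linarith
    _ = (exp (7 / 3))⁻¹ := by rw [← exp_add, ← exp_neg]; ring_nf
    _ ≤ 6 / 7 := by
      rw [inv_le_iff_one_le_mul₀ (exp_pos _)]
      linarith [add_one_le_exp (7 / 3 : ℝ)]
  have hq : exp (-κ) < 1 := exp_lt_one_iff.2 (by linarith [(d.cast_nonneg : (0 : ℝ) ≤ d)])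
  have hbernoulli : 1 - d * exp (-κ) ≤ (1 - exp (-κ)) ^ d := by
    simpa [sub_eq_add_neg] using one_add_mul_le_pow (a := -exp (-κ)) (by linarith) d
  rw [inv_pow, inv_le_iff_one_le_mul₀ (by linarith)]
  linarith

lemma inv_one_sub_exp_neg_pow_le {d : ℕ} {κ x : ℝ} (hκ : 0 < κ) (hx1 : 1 ≤ x)
    (hx : (((d : ℝ) + 4 / 3) / κ) ^ κ ≤ x) :
    (1 - exp (-κ))⁻¹ ^ d ≤ 7 * x ^ (((d : ℝ) + 1) / κ) := by
  have hX : 1 ≤ x ^ (((d : ℝ) + 1) / κ) := one_le_rpow hx1 (by positivity)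
  rcases le_or_gt κ (d + 4 / 3) with h | h
  · set R : ℝ := ((d : ℝ) + 4 / 3) / κ
    have hR : 0 ≤ R := by positivity
    calc (1 - exp (-κ))⁻¹ ^ d ≤ 3 * R ^ (d + 1) := inv_one_sub_exp_neg_pow_le_of_le hκ h
      _ = 3 * (R ^ κ) ^ (((d : ℝ) + 1) / κ) := by
          rw [← rpow_mul hR, mul_div_cancel₀ _ hκ.ne', ← Nat.cast_succ, rpow_natCast]
      _ ≤ 3 * x ^ (((d : ℝ) + 1) / κ) := by gcongr
      _ ≤ 7 * x ^ (((d : ℝ) + 1) / κ) := by linarith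
  · linarith [inv_one_sub_exp_neg_pow_le_seven h]

lemma norm_monom_le {d : ℕ} {z : Fin d → ℂ} {r : ℝ} (hz : ∀ a, ‖z a‖ ≤ r) (i : Idx d) :
    ‖monom i z‖ ≤ r ^ degSum i := by
  rw [monom, norm_prod, degSum, ← Finset.prod_pow_eq_pow_sum]
  exact Finset.prod_le_prod (fun _ _ => by positivity) fun a _ => by
    rw [norm_pow]
    exact pow_le_pow_left₀ (norm_nonneg _) (hz a) _

lemma CoeffBound.norm_le {d : ℕ} {κ S : ℝ} {c : Idx d → ℂ} (hb : CoeffBound κ S c) (i : Idx d) :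
    ‖c i‖ ≤ S ^ degSum i * (degSum i : ℝ) ^ (-(κ * degSum i)) := by
  rcases eq_or_ne i 0 with rfl | hi
  · simp [hb.1, degSum]
  · exact hb.2.2 i hi

lemma CoeffBound.norm_mul_monom_le {d : ℕ} {κ S ν x : ℝ} {c : Idx d → ℂ} (hb : CoeffBound κ S c)
    (hκ : 0 < κ) (hS : 0 ≤ S) (hν : 0 ≤ ν) (hx : 0 < x) (hSx : S * ν ≤ x)
    {z : Fin d → ℂ} (hz : ∀ a, ‖z a‖ ≤ ν) (i : Idx d) :
    ‖c i * monom i z‖ ≤ exp (κ * x ^ (1 / κ)) * exp (-κ) ^ degSum i := by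
  calc ‖c i * monom i z‖
      ≤ S ^ degSum i * (degSum i : ℝ) ^ (-(κ * degSum i)) * ν ^ degSum i := by
        rw [norm_mul]
        gcongr
        · exact hb.norm_le i
        · exact norm_monom_le hz i
    _ = (S * ν) ^ degSum i * (degSum i : ℝ) ^ (-(κ * degSum i)) := by ring
    _ ≤ ((x ^ (1 / κ)) ^ κ) ^ degSum i * (degSum i : ℝ) ^ (-(κ * degSum i)) := by
        rw [one_div, rpow_inv_rpow hx.le hκ.ne']
        gcongr
    _ ≤ exp (κ * x ^ (1 / κ)) * exp (-κ) ^ degSum i :=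
        rpow_pow_mul_rpow_neg_le hκ (by positivity) _

lemma HasCoeffs.norm_le_of_coeffBound {d : ℕ} {κ S ν x : ℝ} {c : Idx d → ℂ}
    {φ : (Fin d → ℂ) → ℂ} (hc : HasCoeffs c φ) (hb : CoeffBound κ S c)
    (hκ : 0 < κ) (hS : 0 ≤ S) (hν : 0 ≤ ν) (hx : 0 < x) (hSx : S * ν ≤ x)
    {z : Fin d → ℂ} (hz : ∀ a, ‖z a‖ ≤ ν) :
    ‖φ z‖ ≤ exp (κ * x ^ (1 / κ)) * (1 - exp (-κ))⁻¹ ^ d :=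
  (hc z).2.norm_le_of_bounded
    ((hasSum_pow_degSum (exp_pos _).le (exp_lt_one_iff.2 (neg_lt_zero.2 hκ)) d).mul_left _)
    (hb.norm_mul_monom_le hκ hS hν hx hSx hz)

theorem stmt16_general (d : ℕ) (κ S : ℝ) (hκ : 0 < κ) (hS : 0 < S)
    (ν : ℝ) (hν : 0 < ν)
    (φ : (Fin d → ℂ) → ℂ) (c : Idx d → ℂ)
    (hc : HasCoeffs c φ) (hb : CoeffBound κ S c)
    (t : Fin d → ℝ) (ht : ∀ a, |t a| ≤ ν) :
    ‖φ (fun a => (t a : ℂ))‖ ≤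
      7 * (max (S * ν) (max 1 ((((d : ℝ) + 4 / 3) / κ) ^ κ))) ^ (((d : ℝ) + 1) / κ) *
        Real.exp (κ * (max (S * ν) (max 1 ((((d : ℝ) + 4 / 3) / κ) ^ κ))) ^ (1 / κ)) := by
  set x := max (S * ν) (max 1 ((((d : ℝ) + 4 / 3) / κ) ^ κ))
  have hx1 : 1 ≤ x := le_max_of_le_right (le_max_left _ _)
  have hxd : (((d : ℝ) + 4 / 3) / κ) ^ κ ≤ x := le_max_of_le_right (le_max_right _ _)
  have hφ := hc.norm_le_of_coeffBound hb hκ hS.le hν.le (by linarith) (le_max_left _ _)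
    (z := fun a => (t a : ℂ)) (by simpa using ht)
  calc ‖φ (fun a => (t a : ℂ))‖ ≤ exp (κ * x ^ (1 / κ)) * (1 - exp (-κ))⁻¹ ^ d := hφ
    _ ≤ exp (κ * x ^ (1 / κ)) * (7 * x ^ (((d : ℝ) + 1) / κ)) := by
        gcongr
        exact inv_one_sub_exp_neg_pow_le hκ hx1 hxd
    _ = _ := mul_comm _ _

theorem stmt16 (d : ℕ) (hd : 1 ≤ d) (κ S : ℝ) (hκ : 0 < κ) (hS : 0 < S)
    (ν : ℝ) (hν : 0 < ν)
    (φ : (Fin d → ℂ) → ℂ) (c : Idx d → ℂ)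
    (hc : HasCoeffs c φ) (hb : CoeffBound κ S c)
    (t : Fin d → ℝ) (ht : ∀ a, |t a| ≤ ν) :
    ‖φ (fun a => (t a : ℂ))‖ ≤
      7 * (max (S * ν) (max 1 ((((d : ℝ) + 4 / 3) / κ) ^ κ))) ^ (((d : ℝ) + 1) / κ) *
        Real.exp (κ * (max (S * ν) (max 1 ((((d : ℝ) + 4 / 3) / κ) ^ κ))) ^ (1 / κ)) :=
  stmt16_general d κ S hκ hS ν hν φ c hc hb t ht

end Stmt16
end

section
/- Let d ≥ 1. For all κ > 0, S > 0, ν > 0, every φ ∈ Υ_{κ,S} and every integer m ≥ d/κ, sup_{t ∈ [−ν,ν]^d} |φ(t) − T_m φ(t)| ≤ 2^d · (Sν)^m · m^{−κm+d} · f_κ(Sν). -/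
/-! On `[-ν, ν]^d` the term `c_i t^i` of degree `n = ‖i‖₁` has norm at most
`(Sν)^n n^(-κn)`, and at most `(n + 1)^d` multi-indices have degree `n`, so
`|φ(t) - T_m φ(t)| ≤ Σ_{n > m} (n + 1)^d (Sν)^n n^(-κn)`. Writing `n = m + 1 + j`, we have
`(n + 1)^d ≤ 2^d n^d` and
`n^(d - κn) = n^(d - κm) n^(-κ(j+1)) ≤ m^(d - κm) (j + 1 + d/κ)^(-κ(j+1))`, since
`d - κm ≤ 0` and `n ≥ j + 1 + d/κ`; summing over `j` gives `f_κ(Sν)`. -/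

namespace Stmt18

abbrev Idx (d : ℕ) := Fin d → ℕ

def degSum {d : ℕ} (i : Idx d) : ℕ := ∑ a, i a

noncomputable def monom {d : ℕ} (i : Idx d) (z : Fin d → ℂ) : ℂ := ∏ a, z a ^ i a

/-- φ is given everywhere on ℂ^d by the absolutely convergent power series with
coefficients c. -/
def HasCoeffs {d : ℕ} (c : Idx d → ℂ) (φ : (Fin d → ℂ) → ℂ) : Prop :=
  ∀ z : Fin d → ℂ,
    Summable (fun i : Idx d => ‖c i * monom i z‖) ∧
    HasSum (fun i : Idx d => c i * monom i z) (φ z)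

/-- The coefficient conditions defining the class Υ_{κ,S}. -/
def CoeffBound {d : ℕ} (κ S : ℝ) (c : Idx d → ℂ) : Prop :=
  c 0 = 1 ∧
  (∀ i : Idx d, (starRingEnd ℂ) (c i) = (-1 : ℂ) ^ degSum i * c i) ∧
  ∀ i : Idx d, i ≠ 0 →
    ‖c i‖ ≤ S ^ degSum i * (degSum i : ℝ) ^ (-(κ * (degSum i : ℝ)))

/-- The truncation T_m φ: keep only the coefficients of total degree at most m. -/
noncomputable def trunc {d : ℕ} (m : ℕ) (c : Idx d → ℂ) (z : Fin d → ℂ) : ℂ :=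
  ∑' i : Idx d, if degSum i ≤ m then c i * monom i z else 0

/-- f_κ(u) = Σ_{m ≥ 1} (m + d/κ)^{−κm} u^m. -/
noncomputable def fkappa (d : ℕ) (κ u : ℝ) : ℝ :=
  ∑' m : ℕ, (((m : ℝ) + 1) + (d : ℝ) / κ) ^ (-(κ * ((m : ℝ) + 1))) * u ^ (m + 1)

open Finset Filter Topology

noncomputable def fkappaTerm (d : ℕ) (κ u : ℝ) (j : ℕ) : ℝ :=
  (((j : ℝ) + 1) + (d : ℝ) / κ) ^ (-(κ * ((j : ℝ) + 1))) * u ^ (j + 1)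

lemma fkappa_eq_tsum (d : ℕ) (κ u : ℝ) : fkappa d κ u = ∑' j, fkappaTerm d κ u j := rfl

lemma fkappaTerm_eq_pow {d : ℕ} {κ : ℝ} (hκ : 0 < κ) (u : ℝ) (j : ℕ) :
    fkappaTerm d κ u j = ((((j : ℝ) + 1) + (d : ℝ) / κ) ^ (-κ) * u) ^ (j + 1) := by
  have hx : 0 ≤ ((j : ℝ) + 1) + (d : ℝ) / κ := by positivity
  rw [fkappaTerm, mul_pow, ← Real.rpow_mul_natCast hx]
  push_cast
  ring_nf

lemma summable_fkappaTerm (d : ℕ) {κ : ℝ} (hκ : 0 < κ) (u : ℝ) :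
    Summable (fkappaTerm d κ u) := by
  have hbase : Tendsto (fun j : ℕ => (((j : ℝ) + 1) + (d : ℝ) / κ) ^ (-κ) * u) atTop (𝓝 0) := by
    have hx : Tendsto (fun j : ℕ => ((j : ℝ) + 1) + (d : ℝ) / κ) atTop atTop :=
      tendsto_atTop_add_const_right _ _ <| tendsto_atTop_add_const_right _ _
        tendsto_natCast_atTop_atTop
    simpa using ((tendsto_rpow_neg_atTop hκ).comp hx).mul_const u
  refine Summable.of_norm_bounded_eventually (summable_geometric_two.comp_injective
    (add_left_injective 1)) ?_
  rw [Nat.cofinite_eq_atTop]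
  filter_upwards [(hbase.norm.eventually (gt_mem_nhds (by norm_num : ‖(0 : ℝ)‖ < 1 / 2)))]
    with j hj
  rw [fkappaTerm_eq_pow hκ, norm_pow, Function.comp_apply]
  exact pow_le_pow_left₀ (norm_nonneg _) hj.le _

lemma rpow_mul_rpow_neg_le {d m : ℕ} {κ : ℝ} (hκ : 0 < κ) (hm : 0 < m) (hdm : (d : ℝ) / κ ≤ m)
    (j : ℕ) :
    ((m + 1 + j : ℕ) : ℝ) ^ d * ((m + 1 + j : ℕ) : ℝ) ^ (-(κ * ((m + 1 + j : ℕ) : ℝ))) ≤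
      (m : ℝ) ^ (-(κ * (m : ℝ)) + (d : ℝ)) *
        (((j : ℝ) + 1) + (d : ℝ) / κ) ^ (-(κ * ((j : ℝ) + 1))) := by
  have hm0 : (0 : ℝ) < m := by exact_mod_cast hm
  have hn : (((m + 1 + j : ℕ)) : ℝ) = m + ((j : ℝ) + 1) := by push_cast; ring
  have hdκm : (d : ℝ) ≤ κ * m := by rwa [div_le_iff₀ hκ, mul_comm] at hdm
  rw [hn, ← Real.rpow_natCast _ d, ← Real.rpow_add (by positivity)]
  calc (m + ((j : ℝ) + 1)) ^ ((d : ℝ) + -(κ * (m + ((j : ℝ) + 1))))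
      = (m + ((j : ℝ) + 1)) ^ (-(κ * (m : ℝ)) + (d : ℝ)) *
          (m + ((j : ℝ) + 1)) ^ (-(κ * ((j : ℝ) + 1))) := by
        rw [← Real.rpow_add (by positivity)]; ring_nf
    _ ≤ _ := by
        gcongr ?_ * ?_
        · exact Real.rpow_le_rpow_of_nonpos hm0 (by linarith) (by linarith)
        · exact Real.rpow_le_rpow_of_nonpos (by positivity) (by linarith)
            (by nlinarith)

lemma add_one_pow_mul_term_le_fkappaTerm {d m : ℕ} {κ u : ℝ} (hκ : 0 < κ) (hu : 0 ≤ u) (hm : 0 < m)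
    (hdm : (d : ℝ) / κ ≤ m) (j : ℕ) :
    (((m + 1 + j : ℕ) : ℝ) + 1) ^ d *
        (u ^ (m + 1 + j) * ((m + 1 + j : ℕ) : ℝ) ^ (-(κ * ((m + 1 + j : ℕ) : ℝ)))) ≤
      2 ^ d * u ^ m * (m : ℝ) ^ (-(κ * (m : ℝ)) + (d : ℝ)) * fkappaTerm d κ u j := by
  set n := m + 1 + j
  have hn : (1 : ℝ) ≤ n := by exact_mod_cast (show 1 ≤ n by omega)
  calc ((n : ℝ) + 1) ^ d * (u ^ n * (n : ℝ) ^ (-(κ * (n : ℝ))))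
      ≤ (2 * n) ^ d * (u ^ n * (n : ℝ) ^ (-(κ * (n : ℝ)))) := by gcongr; linarith
    _ = 2 ^ d * u ^ m * ((n : ℝ) ^ d * (n : ℝ) ^ (-(κ * (n : ℝ)))) * u ^ (j + 1) := by
        rw [show n = m + (j + 1) by omega, pow_add u]; ring
    _ ≤ 2 ^ d * u ^ m * ((m : ℝ) ^ (-(κ * (m : ℝ)) + (d : ℝ)) *
          (((j : ℝ) + 1) + (d : ℝ) / κ) ^ (-(κ * ((j : ℝ) + 1)))) * u ^ (j + 1) := by
        gcongr 2 ^ d * u ^ m * ?_ * u ^ (j + 1)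
        exact rpow_mul_rpow_neg_le hκ hm hdm j
    _ = _ := by rw [fkappaTerm]; ring

lemma summable_and_tsum_le_of_eq_zero_of_lt {g h : ℕ → ℝ} {k : ℕ} (hg0 : ∀ n, 0 ≤ g n)
    (hg : ∀ n < k, g n = 0) (hgh : ∀ j, g (k + j) ≤ h j) (hh : Summable h) :
    Summable g ∧ ∑' n, g n ≤ ∑' j, h j := by
  simp only [add_comm k] at hgh
  have hshift : Summable fun j => g (j + k) := .of_nonneg_of_le (fun j => hg0 _) hgh hh
  have hsum : Summable g := (summable_nat_add_iff k).mp hshift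
  refine ⟨hsum, ?_⟩
  rw [← hsum.sum_add_tsum_nat_add k, sum_eq_zero fun n hn => hg n (mem_range.mp hn), zero_add]
  exact hshift.tsum_le_tsum hgh hh

noncomputable def tailBound (κ u : ℝ) (m n : ℕ) : ℝ :=
  if m < n then u ^ n * (n : ℝ) ^ (-(κ * n)) else 0

lemma tailBound_nonneg {κ u : ℝ} (hu : 0 ≤ u) (m n : ℕ) : 0 ≤ tailBound κ u m n := by
  unfold tailBound; split_ifs <;> positivity

lemma summable_and_tsum_tailBound_le {d m : ℕ} {κ u : ℝ} (hκ : 0 < κ) (hu : 0 ≤ u) (hm : 0 < m)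
    (hdm : (d : ℝ) / κ ≤ m) :
    Summable (fun n : ℕ => ((n : ℝ) + 1) ^ d * tailBound κ u m n) ∧
      ∑' n : ℕ, ((n : ℝ) + 1) ^ d * tailBound κ u m n ≤
        2 ^ d * u ^ m * (m : ℝ) ^ (-(κ * (m : ℝ)) + (d : ℝ)) * fkappa d κ u := by
  rw [fkappa_eq_tsum, ← tsum_mul_left]
  refine summable_and_tsum_le_of_eq_zero_of_lt (k := m + 1)
    (fun n => mul_nonneg (by positivity) (tailBound_nonneg hu m n))
    (fun n hn => by simp [tailBound, show ¬m < n by omega])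
    (fun j => ?_) ((summable_fkappaTerm d hκ u).mul_left _)
  rw [tailBound, if_pos (by omega)]
  exact add_one_pow_mul_term_le_fkappaTerm hκ hu hm hdm j

lemma apply_le_degSum {d : ℕ} (i : Idx d) (a : Fin d) : i a ≤ degSum i :=
  single_le_sum (fun _ _ => Nat.zero_le _) (mem_univ a)

lemma card_antidiagonalTuple_le (d n : ℕ) :
    #(Nat.antidiagonalTuple d n) ≤ (n + 1) ^ d := by
  have hsub : Nat.antidiagonalTuple d n ⊆ Fintype.piFinset fun _ => range (n + 1) := by
    intro i hi
    rw [Nat.mem_antidiagonalTuple] at hi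
    simp only [Fintype.mem_piFinset, mem_range, Nat.lt_succ_iff]
    exact fun a => hi ▸ apply_le_degSum i a
  simpa using card_le_card hsub

section

variable {d : ℕ}

lemma tsum_le_tsum_add_one_pow_mul {f : Idx d → ℝ} (hf : Summable f) {b : ℕ → ℝ}
    (hb0 : ∀ n, 0 ≤ b n) (hfb : ∀ i, f i ≤ b (degSum i))
    (hb : Summable fun n : ℕ => ((n : ℝ) + 1) ^ d * b n) :
    ∑' i, f i ≤ ∑' n : ℕ, ((n : ℝ) + 1) ^ d * b n := by
  have hdeg : HasSum (fun n => ∑ i ∈ Nat.antidiagonalTuple d n, f i) (∑' i, f i) :=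
    ((Nat.sigmaAntidiagonalTupleEquivTuple d).hasSum_iff.mpr hf.hasSum).sigma
      fun n => (Nat.antidiagonalTuple d n).hasSum f
  refine hasSum_le (fun n => ?_) hdeg hb.hasSum
  calc ∑ i ∈ Nat.antidiagonalTuple d n, f i
      ≤ ∑ _i ∈ Nat.antidiagonalTuple d n, b n :=
        sum_le_sum fun i hi => Nat.mem_antidiagonalTuple.mp hi ▸ hfb i
    _ = #(Nat.antidiagonalTuple d n) * b n := by rw [sum_const, nsmul_eq_mul]
    _ ≤ ((n : ℝ) + 1) ^ d * b n := by
        gcongr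
        · exact hb0 n
        · exact_mod_cast card_antidiagonalTuple_le d n

lemma norm_monom_le {i : Idx d} {z : Fin d → ℂ} {r : ℝ} (hz : ∀ a, ‖z a‖ ≤ r) :
    ‖monom i z‖ ≤ r ^ degSum i := by
  rw [monom, norm_prod, degSum, ← prod_pow_eq_pow_sum]
  exact prod_le_prod (fun a _ => by positivity) fun a _ => by
    rw [norm_pow]; exact pow_le_pow_left₀ (norm_nonneg _) (hz a) _

lemma norm_coeff_mul_monom_le {κ S : ℝ} {c : Idx d → ℂ} (hb : CoeffBound κ S c) {i : Idx d}
    (hi : i ≠ 0) {z : Fin d → ℂ} {r : ℝ} (hz : ∀ a, ‖z a‖ ≤ r) :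
    ‖c i * monom i z‖ ≤ (S * r) ^ degSum i * (degSum i : ℝ) ^ (-(κ * (degSum i : ℝ))) := by
  have hci := hb.2.2 i hi
  rw [norm_mul, mul_pow]
  calc ‖c i‖ * ‖monom i z‖
      ≤ (S ^ degSum i * (degSum i : ℝ) ^ (-(κ * (degSum i : ℝ)))) * r ^ degSum i :=
        mul_le_mul hci (norm_monom_le hz) (norm_nonneg _) ((norm_nonneg _).trans hci)
    _ = _ := by ring

lemma norm_ite_coeff_mul_monom_le {κ S : ℝ} {c : Idx d → ℂ} (hb : CoeffBound κ S c)
    {z : Fin d → ℂ} {r : ℝ} (hz : ∀ a, ‖z a‖ ≤ r) (m : ℕ) (i : Idx d) :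
    ‖if m < degSum i then c i * monom i z else 0‖ ≤ tailBound κ (S * r) m (degSum i) := by
  unfold tailBound
  split_ifs with hi
  · exact norm_coeff_mul_monom_le hb (by rintro rfl; simp [degSum] at hi) hz
  · simp

lemma sub_trunc_eq_tsum {c : Idx d → ℂ} {φ : (Fin d → ℂ) → ℂ} (hc : HasCoeffs c φ) (m : ℕ)
    (z : Fin d → ℂ) :
    φ z - trunc m c z = ∑' i, if m < degSum i then c i * monom i z else 0 := by
  obtain ⟨habs, hφ⟩ := hc z
  have hhead : Summable fun i => if degSum i ≤ m then c i * monom i z else 0 :=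
    habs.of_norm_bounded fun i => by split_ifs <;> simp [norm_nonneg, mul_nonneg]
  rw [← hφ.tsum_eq, trunc, ← habs.of_norm.tsum_sub hhead]
  congr 1 with i
  split_ifs <;> first | omega | simp

end

theorem stmt18 (d : ℕ) (hd : 1 ≤ d) (κ S ν : ℝ) (hκ : 0 < κ) (hS : 0 < S) (hν : 0 < ν)
    (φ : (Fin d → ℂ) → ℂ) (c : Idx d → ℂ)
    (hc : HasCoeffs c φ) (hb : CoeffBound κ S c)
    (m : ℕ) (hm : (d : ℝ) / κ ≤ (m : ℝ))
    (t : Fin d → ℝ) (ht : ∀ a, |t a| ≤ ν) :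
    ‖φ (fun a => (t a : ℂ)) - trunc m c (fun a => (t a : ℂ))‖ ≤
      (2 : ℝ) ^ d * (S * ν) ^ m * (m : ℝ) ^ (-(κ * (m : ℝ)) + (d : ℝ)) *
        fkappa d κ (S * ν) := by
  set u := S * ν
  have hu : 0 ≤ u := by positivity
  have hm0 : 0 < m := Nat.cast_pos.mp ((by positivity : (0 : ℝ) < d / κ).trans_le hm)
  set z : Fin d → ℂ := fun a => (t a : ℂ)
  have hz : ∀ a, ‖z a‖ ≤ ν := fun a => by simpa [z] using ht a
  set tail : Idx d → ℂ := fun i => if m < degSum i then c i * monom i z else 0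
  have htail_summable : Summable fun i => ‖tail i‖ :=
    (hc z).1.of_nonneg_of_le (fun _ => norm_nonneg _) fun i => by
      dsimp only [tail]; split_ifs <;> simp [mul_nonneg]
  obtain ⟨hsum, hle⟩ := summable_and_tsum_tailBound_le hκ hu hm0 hm
  calc ‖φ z - trunc m c z‖ = ‖∑' i, tail i‖ := by rw [sub_trunc_eq_tsum hc]
    _ ≤ ∑' i, ‖tail i‖ := norm_tsum_le_tsum_norm htail_summable
    _ ≤ ∑' n : ℕ, ((n : ℝ) + 1) ^ d * tailBound κ u m n :=
        tsum_le_tsum_add_one_pow_mul htail_summable (tailBound_nonneg hu m)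
          (norm_ite_coeff_mul_monom_le hb hz m) hsum
    _ ≤ _ := hle

end Stmt18
end
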